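/- arXiv:2206.05187 — 5 statements merged into one kernel-verified Lean document; each statement's English description precedes it below -/
import Mathlib

section
/- Let R^(1),…,R^(M) : ℝ^p → ℝ each be G-Lipschitz and ν-weakly convex, let R̄(w) = (1/M)∑_{m=1}^M R^(m)(w). Fix ρ with 0 < ρ < 1/(2ν), T ≥ 1, 1 ≤ I ≤ M, and set η = ρ/√T. Assume Δ̄_ρ = R̄_ρ(w₀) − inf_w R̄_ρ(w) is finite, where R̄_ρ is the ρ-Moreau envelope of R̄. Let I₁,…,I_T be independent uniformly random subsets of {1,…,M} of cardinality I, and define iterates recursively: for each t and each m, w_t^(m) is the exact minimizer of w ↦ R^(m)(w) + ‖w − w_{t−1}‖²/(2η), and w_t = (1/I)∑_{ξ∈I_t} w_t^(ξ). Then (1/T)∑_{t=0}^{T−1} E[‖∇R̄_ρ(w_t)‖²] ≤ Δ̄_ρ/(T·ρ) + (2Δ̄_ρ + 4G²ρ)/(ρ·√T). -/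
/-!
Let `ŵ = prox_{ρR̄}(w_t)`. The local proximal objectives are `(1/η - ν)`-strongly convex, so they
grow quadratically away from their minimizers `w^(m)`; combined with the `G`-Lipschitz bound and the
optimality of `ŵ` this gives `(1/M) ∑ ‖ŵ - w^(m)‖² ≤ (1 - η/ρ) ‖ŵ - w_t‖² + 2η²G²`. Testing the
Moreau envelope at `ŵ` and Jensen's inequality for the subsample average bound `R̄_ρ(w_{t+1})` by
`R̄(ŵ)` plus the subsample mean of `‖ŵ - w^(ξ)‖² / (2ρ)`; since `w_t` does not depend on `I_t`,
averaging over `I_t` turns the subsample mean into the full mean. Hence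
`E R̄_ρ(w_{t+1}) ≤ E R̄_ρ(w_t) - (η/2) E ‖∇R̄_ρ(w_t)‖² + η²G²/ρ`, and telescoping over `t < T`
with `η = ρ/√T` gives the rate.
-/

open Finset Filter Topology Function
open scoped BigOperators

variable {E : Type*} [NormedAddCommGroup E] [InnerProductSpace ℝ E]

lemma le_of_forall_one_sub_mul_le {c d : ℝ} (h : ∀ θ ∈ Set.Ioo (0 : ℝ) 1, (1 - θ) * c ≤ d) :
    c ≤ d := by
  have hlim : Tendsto (fun θ : ℝ => (1 - θ) * c) (𝓝[>] 0) (𝓝 c) := by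
    have : Continuous fun θ : ℝ => (1 - θ) * c := by fun_prop
    simpa using (this.tendsto 0).mono_left nhdsWithin_le_nhds
  exact le_of_tendsto hlim (eventually_of_mem (Ioo_mem_nhdsGT one_pos) h)

lemma StrongConvexOn.add_sq_norm_sub_le_of_isMinOn {s : Set E} {m : ℝ} {f : E → ℝ} {z x : E}
    (hf : StrongConvexOn s m f) (hz : IsMinOn f s z) (hzs : z ∈ s) (hxs : x ∈ s) :
    f z + m / 2 * ‖x - z‖ ^ 2 ≤ f x := by
  suffices ∀ θ ∈ Set.Ioo (0 : ℝ) 1, (1 - θ) * (m / 2 * ‖x - z‖ ^ 2) ≤ f x - f z by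
    linarith [le_of_forall_one_sub_mul_le this]
  rintro θ ⟨hθ0, hθ1⟩
  have hcomb := hf.2 hxs hzs hθ0.le (sub_nonneg.2 hθ1.le) (add_sub_cancel θ 1)
  have hmin := hz (hf.1 hxs hzs hθ0.le (sub_nonneg.2 hθ1.le) (add_sub_cancel θ 1))
  simp only [smul_eq_mul, Set.mem_ofPred_eq] at hcomb hmin
  have : θ * ((1 - θ) * (m / 2 * ‖x - z‖ ^ 2)) ≤ θ * (f x - f z) := by nlinarith
  exact le_of_mul_le_mul_left this hθ0

lemma strongConvexOn_add_sq_norm_sub_div {s : Set E} {ν r : ℝ} {f : E → ℝ}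
    (hf : ConvexOn ℝ s fun u => f u + ν / 2 * ‖u‖ ^ 2) (w : E) :
    StrongConvexOn s (1 / r - ν) fun u => f u + ‖u - w‖ ^ 2 / (2 * r) := by
  rw [strongConvexOn_iff_convex]
  have haff : ConvexOn ℝ s fun u => ‖w‖ ^ 2 / (2 * r) - r⁻¹ * inner ℝ w u :=
    (((-r⁻¹) • innerₛₗ ℝ w).convexOn hf.1).add_const (‖w‖ ^ 2 / (2 * r)) |>.congr
      fun u _ => by
        simp only [neg_smul, LinearMap.coe_neg, LinearMap.coe_smul, coe_innerₛₗ_apply, Pi.add_apply,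
          Pi.neg_apply, Pi.smul_apply, smul_eq_mul]
        ring
  refine (hf.add haff).congr fun u _ => ?_
  simp only [Pi.add_apply, norm_sub_sq_real, real_inner_comm w u]
  ring

lemma IsMinOn.prox_growth {s : Set E} {f : E → ℝ} {ν r : ℝ} {w z x : E}
    (hf : ConvexOn ℝ s fun u => f u + ν / 2 * ‖u‖ ^ 2)
    (hz : IsMinOn (fun u => f u + ‖u - w‖ ^ 2 / (2 * r)) s z) (hzs : z ∈ s) (hxs : x ∈ s) :
    f z + ‖z - w‖ ^ 2 / (2 * r) + (1 / r - ν) / 2 * ‖x - z‖ ^ 2 ≤ f x + ‖x - w‖ ^ 2 / (2 * r) :=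
  (strongConvexOn_add_sq_norm_sub_div hf w).add_sq_norm_sub_le_of_isMinOn hz hzs hxs

lemma mul_le_sq_div_add {G b η : ℝ} (hη : 0 < η) : G * b ≤ b ^ 2 / (2 * η) + η * G ^ 2 / 2 := by
  have : 0 ≤ (b - η * G) ^ 2 / (2 * η) := by positivity
  have e : (b - η * G) ^ 2 / (2 * η) = b ^ 2 / (2 * η) + η * G ^ 2 / 2 - G * b := by
    field_simp; ring
  linarith

lemma IsMinOn.prox_lipschitz_bound {f : E → ℝ} {ν η G : ℝ} {w z : E} (hη : 0 < η)
    (hlip : ∀ u u', |f u - f u'| ≤ G * ‖u - u'‖)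
    (hf : ConvexOn ℝ Set.univ fun u => f u + ν / 2 * ‖u‖ ^ 2)
    (hz : IsMinOn (fun u => f u + ‖u - w‖ ^ 2 / (2 * η)) Set.univ z) (x : E) :
    f w + (1 / η - ν) / 2 * ‖x - z‖ ^ 2 ≤ f x + ‖x - w‖ ^ 2 / (2 * η) + η * G ^ 2 / 2 := by
  have hgrowth := hz.prox_growth hf (Set.mem_univ z) (Set.mem_univ x)
  have hdecrease : f w - f z ≤ G * ‖z - w‖ := by
    rw [norm_sub_rev]; exact (le_abs_self _).trans (hlip w z)
  linarith [mul_le_sq_div_add (G := G) (b := ‖z - w‖) hη]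

lemma convexOn_sum {ι : Type*} {s : Set E} {t : Finset ι} {f : ι → E → ℝ} (hs : Convex ℝ s)
    (hf : ∀ i ∈ t, ConvexOn ℝ s (f i)) : ConvexOn ℝ s fun x => ∑ i ∈ t, f i x := by
  classical
  induction t using Finset.induction_on with
  | empty => simpa using convexOn_const 0 hs
  | insert i t hi ih =>
    simp only [Finset.sum_insert hi]
    exact (hf i (mem_insert_self i t)).add (ih fun j hj => hf j (mem_insert_of_mem hj))

lemma convexOn_expect {ι : Type*} {s : Set E} {t : Finset ι} {f : ι → E → ℝ} (hs : Convex ℝ s)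
    (hf : ∀ i ∈ t, ConvexOn ℝ s (f i)) : ConvexOn ℝ s fun x => 𝔼 i ∈ t, f i x := by
  simp only [expect_eq_sum_div_card, div_eq_inv_mul]
  exact (convexOn_sum hs hf).smul (by positivity)

lemma le_one_sub_div_mul_add_of_le {ν ρ η G X D : ℝ} (hη : 0 < η) (hηρ : η ≤ ρ)
    (hρν : 2 * ρ * ν < 1) (hD : 0 ≤ D)
    (h : (1 / η - ν) / 2 * X ≤ D / (2 * η) - D / (2 * ρ) - (1 / ρ - ν) / 2 * D + η * G ^ 2 / 2) :
    X ≤ (1 - η / ρ) * D + 2 * η ^ 2 * G ^ 2 := by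
  have hρ : 0 < ρ := hη.trans_le hηρ
  have hνη : 2 * η * ν < 1 := by
    rcases le_total 0 ν with hν | hν
    · nlinarith [mul_le_mul_of_nonneg_right hηρ hν]
    · nlinarith
  have hμ : 0 < 1 / η - ν := by
    rw [sub_pos, lt_div_iff₀ hη]; nlinarith
  have hc : 0 ≤ 1 - 2 * ρ * ν + η * ν := by
    rcases le_total 0 ν with hν | hν <;> nlinarith
  have e : (1 / η - ν) * ((1 - η / ρ) * D + 2 * η ^ 2 * G ^ 2)
      - 2 * (D / (2 * η) - D / (2 * ρ) - (1 / ρ - ν) / 2 * D + η * G ^ 2 / 2)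
      = D * (1 - 2 * ρ * ν + η * ν) / ρ + η * G ^ 2 * (1 - 2 * η * ν) := by
    field_simp; ring
  have : 0 ≤ D * (1 - 2 * ρ * ν + η * ν) / ρ + η * G ^ 2 * (1 - 2 * η * ν) := by
    have : 0 ≤ 1 - 2 * η * ν := by linarith
    positivity
  exact le_of_mul_le_mul_left (by linarith) hμ

lemma expect_sq_norm_sub_localProx_le {ι : Type*} [Fintype ι] [Nonempty ι] {f : ι → E → ℝ}
    {fbar : E → ℝ} {ν ρ η G : ℝ} {w wbar : E} {z : ι → E}
    (hη : 0 < η) (hηρ : η ≤ ρ) (hρν : 2 * ρ * ν < 1)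
    (hlip : ∀ i u u', |f i u - f i u'| ≤ G * ‖u - u'‖)
    (hf : ∀ i, ConvexOn ℝ Set.univ fun u => f i u + ν / 2 * ‖u‖ ^ 2)
    (hfbar : ∀ u, fbar u = 𝔼 i, f i u)
    (hwbar : IsMinOn (fun u => fbar u + ‖u - w‖ ^ 2 / (2 * ρ)) Set.univ wbar)
    (hz : ∀ i, IsMinOn (fun u => f i u + ‖u - w‖ ^ 2 / (2 * η)) Set.univ (z i)) :
    𝔼 i, ‖wbar - z i‖ ^ 2 ≤ (1 - η / ρ) * ‖wbar - w‖ ^ 2 + 2 * η ^ 2 * G ^ 2 := by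
  have hfbar_wc : ConvexOn ℝ Set.univ fun u => fbar u + ν / 2 * ‖u‖ ^ 2 :=
    (convexOn_expect (t := univ) convex_univ fun i _ => hf i).congr fun u _ => by
      simp only [hfbar, expect_add_distrib, Fintype.expect_const]
  have hlocal : fbar w + (1 / η - ν) / 2 * 𝔼 i, ‖wbar - z i‖ ^ 2
      ≤ fbar wbar + ‖wbar - w‖ ^ 2 / (2 * η) + η * G ^ 2 / 2 := by
    have := expect_le_expect (s := univ) fun i _ =>
      (hz i).prox_lipschitz_bound hη (hlip i) (hf i) wbar
    simpa only [hfbar, expect_add_distrib, Fintype.expect_const, ← mul_expect] using this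
  have hglobal := hwbar.prox_growth hfbar_wc (Set.mem_univ wbar) (Set.mem_univ w)
  rw [sub_self, norm_zero, norm_sub_rev w wbar, zero_pow two_ne_zero, zero_div, add_zero]
    at hglobal
  exact le_one_sub_div_mul_add_of_le hη hηρ hρν (sq_nonneg _) (by linarith)

lemma sq_norm_sub_inv_card_smul_sum_le {ι : Type*} {s : Finset ι} (hs : s.Nonempty) (x : E)
    (v : ι → E) :
    ‖x - (#s : ℝ)⁻¹ • ∑ i ∈ s, v i‖ ^ 2 ≤ 𝔼 i ∈ s, ‖x - v i‖ ^ 2 := by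
  have hs' : (#s : ℝ) ≠ 0 := by exact_mod_cast hs.card_pos.ne'
  have hconv : ConvexOn ℝ Set.univ fun y : E => ‖y‖ ^ 2 :=
    convexOn_univ_norm.pow (fun _ _ => norm_nonneg _) 2
  have hx : x - (#s : ℝ)⁻¹ • ∑ i ∈ s, v i = ∑ i ∈ s, (#s : ℝ)⁻¹ • (x - v i) := by
    rw [← smul_sum, sum_sub_distrib, sum_const, ← Nat.cast_smul_eq_nsmul ℝ, smul_sub,
      smul_smul, inv_mul_cancel₀ hs', one_smul]
  rw [hx, Finset.expect_eq_sum_div_card, sum_div]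
  simpa only [smul_eq_mul, div_eq_inv_mul] using
    hconv.map_sum_le (fun _ _ => by positivity) (by simp [hs']) fun _ _ => Set.mem_univ _

lemma IsMinOn.ciInf_eq_univ {α : Type*} {g : α → ℝ} {a : α} (h : IsMinOn g Set.univ a) :
    ⨅ x, g x = g a :=
  have : Nonempty α := ⟨a⟩
  le_antisymm (ciInf_le ⟨g a, by rintro _ ⟨y, rfl⟩; exact h (Set.mem_univ y)⟩ a)
    (le_ciInf fun x => h (Set.mem_univ x))

lemma expect_powersetCard_expect {ι : Type*} [Fintype ι] [DecidableEq ι] {k : ℕ} (hk : 0 < k)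
    (hkn : k ≤ Fintype.card ι) (g : ι → ℝ) :
    𝔼 s ∈ powersetCard k univ, 𝔼 i ∈ s, g i = 𝔼 i, g i := by
  obtain ⟨k, rfl⟩ : ∃ k', k = k' + 1 := ⟨k - 1, by omega⟩
  obtain ⟨n, hn⟩ : ∃ n, Fintype.card ι = n + 1 := ⟨Fintype.card ι - 1, by omega⟩
  have hcount : ∀ i : ι, #{s ∈ powersetCard (k + 1) univ | i ∈ s} = n.choose k := by
    intro i
    simpa [Finset.singleton_subset_iff, hn] using
      card_filter_powersetCard_subset {i} univ (k + 1) (subset_univ _) (by simp)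
  have hsum : ∑ s ∈ powersetCard (k + 1) univ, ∑ i ∈ s, g i = n.choose k * ∑ i, g i := by
    rw [sum_comm' (t' := univ) (s' := fun i => {s ∈ powersetCard (k + 1) univ | i ∈ s})
      (fun s i => by simp), mul_sum]
    simp only [sum_const, hcount, nsmul_eq_mul]
  have hchoose : ((Fintype.card ι).choose (k + 1) : ℝ) * (k + 1) = Fintype.card ι * n.choose k := by
    rw [hn]; exact_mod_cast (Nat.add_one_mul_choose_eq n k).symm
  have hcard : ∀ s ∈ powersetCard (k + 1) univ, 𝔼 i ∈ s, g i = (∑ i ∈ s, g i) / (k + 1) := by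
    intro s hs; rw [Finset.expect_eq_sum_div_card, (mem_powersetCard.1 hs).2]; push_cast; rfl
  rw [expect_congr rfl hcard, ← expect_div, Finset.expect_eq_sum_div_card, hsum, card_powersetCard,
    card_univ, Fintype.expect_eq_sum_div_card]
  have hnk : (n.choose k : ℝ) ≠ 0 := by exact_mod_cast (Nat.choose_pos (by omega)).ne'
  rw [div_div, hchoose, mul_comm (Fintype.card ι : ℝ), mul_div_mul_left _ _ hnk]

lemma expect_piFinset_apply {τ α : Type*} [Fintype τ] [DecidableEq τ]
    (S : Finset α) (j : τ) (F : (τ → α) → α → ℝ)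
    (hF : ∀ σ ∈ Fintype.piFinset fun _ => S, ∀ a ∈ S, ∀ b, F (update σ j a) b = F σ b) :
    𝔼 σ ∈ Fintype.piFinset (fun _ => S), F σ (σ j)
      = 𝔼 σ ∈ Fintype.piFinset (fun _ => S), 𝔼 a ∈ S, F σ a := by
  set P := Fintype.piFinset fun _ : τ => S
  rcases S.eq_empty_or_nonempty with rfl | hS
  · have : P = ∅ := Fintype.piFinset_eq_empty.2 ⟨j, rfl⟩
    simp [this]
  have hupdate : ∀ σ ∈ P, ∀ a ∈ S, update σ j a ∈ P := fun σ hσ a ha =>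
    Fintype.mem_piFinset.2 fun i => by
      rcases eq_or_ne i j with rfl | hi
      · simpa using ha
      · simpa [hi] using Fintype.mem_piFinset.1 hσ i
  rw [← expect_product']
  calc 𝔼 σ ∈ P, F σ (σ j)
      = 𝔼 σ ∈ P, 𝔼 _a ∈ S, F σ (σ j) := by simp only [Finset.expect_const hS]
    _ = 𝔼 x ∈ P ×ˢ S, F x.1 (x.1 j) := (expect_product' _ _ _).symm
    _ = 𝔼 x ∈ P ×ˢ S, F x.1 x.2 := by
      refine expect_nbij' (fun x => (update x.1 j x.2, x.1 j)) (fun x => (update x.1 j x.2, x.1 j))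
        ?_ ?_ ?_ ?_ ?_
      all_goals simp only [mem_product, Prod.forall]
      · exact fun σ a h => ⟨hupdate σ h.1 a h.2, Fintype.mem_piFinset.1 h.1 j⟩
      · exact fun σ a h => ⟨hupdate σ h.1 a h.2, Fintype.mem_piFinset.1 h.1 j⟩
      · simp
      · simp
      · exact fun σ a h => by simp [hF σ h.1 a h.2]

lemma iterate_eq_of_forall_lt_eq {α β : Type*} {T : ℕ} {P : Set (Fin T → α)}
    {W : (Fin T → α) → ℕ → β} {w₀ : β} (Φ : ℕ → α → β → β) (h0 : ∀ σ ∈ P, W σ 0 = w₀)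
    (hsucc : ∀ σ ∈ P, ∀ t (ht : t < T), W σ (t + 1) = Φ t (σ ⟨t, ht⟩) (W σ t))
    {σ σ' : Fin T → α} (hσ : σ ∈ P) (hσ' : σ' ∈ P) :
    ∀ t ≤ T, (∀ i : Fin T, (i : ℕ) < t → σ i = σ' i) → W σ t = W σ' t
  | 0, _, _ => (h0 σ hσ).trans (h0 σ' hσ').symm
  | t + 1, ht, h => by
    rw [hsucc σ hσ t ht, hsucc σ' hσ' t ht, h ⟨t, ht⟩ t.lt_add_one,
      iterate_eq_of_forall_lt_eq Φ h0 hsucc hσ hσ' t (by omega) fun i hi => h i (by omega)]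

lemma iterate_update_eq {α β : Type*} {T : ℕ} {S : Finset α} {W : (Fin T → α) → ℕ → β}
    {w₀ : β} (Φ : ℕ → α → β → β) (h0 : ∀ σ, W σ 0 = w₀)
    (hsucc : ∀ σ ∈ Fintype.piFinset fun _ => S, ∀ t (ht : t < T),
      W σ (t + 1) = Φ t (σ ⟨t, ht⟩) (W σ t))
    {σ : Fin T → α} (hσ : σ ∈ Fintype.piFinset fun _ => S) {t : ℕ} (ht : t < T) {a : α}
    (ha : a ∈ S) : W (update σ ⟨t, ht⟩ a) t = W σ t := by
  refine iterate_eq_of_forall_lt_eq Φ (fun σ _ => h0 σ) hsucc ?_ hσ t ht.le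
    fun i hi => update_of_ne (by rintro rfl; exact lt_irrefl _ hi) _ _
  refine Fintype.mem_piFinset.2 fun i => ?_
  rcases eq_or_ne i ⟨t, ht⟩ with rfl | hi
  · simpa using ha
  · simpa [hi] using Fintype.mem_piFinset.1 hσ i

lemma expect_moreau_fedprox_step_le {ι τ : Type*} [Fintype ι] [DecidableEq ι] [Fintype τ]
    [DecidableEq τ] {k : ℕ} (hk : 0 < k) (hkn : k ≤ Fintype.card ι) {ν ρ η G : ℝ}
    (hη : 0 < η) (hηρ : η ≤ ρ) (hρν : 2 * ρ * ν < 1) {f : ι → E → ℝ} {fbar env : E → ℝ}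
    {prox : E → E} (hlip : ∀ i u u', |f i u - f i u'| ≤ G * ‖u - u'‖)
    (hf : ∀ i, ConvexOn ℝ Set.univ fun u => f i u + ν / 2 * ‖u‖ ^ 2)
    (hfbar : ∀ u, fbar u = 𝔼 i, f i u)
    (henv : ∀ u, env u = ⨅ v, fbar v + ‖v - u‖ ^ 2 / (2 * ρ))
    (hprox : ∀ u, IsMinOn (fun v => fbar v + ‖v - u‖ ^ 2 / (2 * ρ)) Set.univ (prox u))
    (j : τ) (w : (τ → Finset ι) → E)
    (hw : ∀ σ ∈ Fintype.piFinset fun _ : τ => (univ : Finset ι).powersetCard k,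
      ∀ s ∈ (univ : Finset ι).powersetCard k, w (update σ j s) = w σ)
    (z : E → ι → E)
    (hz : ∀ σ ∈ Fintype.piFinset fun _ : τ => (univ : Finset ι).powersetCard k,
      ∀ i, IsMinOn (fun u => f i u + ‖u - w σ‖ ^ 2 / (2 * η)) Set.univ (z (w σ) i)) :
    𝔼 σ ∈ Fintype.piFinset (fun _ : τ => (univ : Finset ι).powersetCard k),
        env ((k : ℝ)⁻¹ • ∑ i ∈ σ j, z (w σ) i)
      ≤ 𝔼 σ ∈ Fintype.piFinset (fun _ : τ => (univ : Finset ι).powersetCard k), env (w σ)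
        - η / 2 * 𝔼 σ ∈ Fintype.piFinset (fun _ : τ => (univ : Finset ι).powersetCard k),
            ‖ρ⁻¹ • (w σ - prox (w σ))‖ ^ 2
        + η ^ 2 * G ^ 2 / ρ := by
  set P := Fintype.piFinset fun _ : τ => (univ : Finset ι).powersetCard k
  have : Nonempty ι := Fintype.card_pos_iff.mp (hk.trans_le hkn)
  have hρ : 0 < ρ := hη.trans_le hηρ
  have hP : P.Nonempty := Fintype.piFinset_nonempty.2 fun _ => powersetCard_nonempty.2 (by simpa)
  have henv_eq : ∀ u, env u = fbar (prox u) + ‖prox u - u‖ ^ 2 / (2 * ρ) := fun u =>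
    (henv u).trans (hprox u).ciInf_eq_univ
  set D := fun σ => ‖prox (w σ) - w σ‖ ^ 2
  set h := fun σ i => ‖prox (w σ) - z (w σ) i‖ ^ 2
  have hnext : ∀ σ ∈ P, env ((k : ℝ)⁻¹ • ∑ i ∈ σ j, z (w σ) i)
      ≤ env (w σ) - D σ / (2 * ρ) + (𝔼 i ∈ σ j, h σ i) / (2 * ρ) := by
    intro σ hσ
    have hcard : #(σ j) = k := (mem_powersetCard.1 (Fintype.mem_piFinset.1 hσ j)).2
    have hjensen := sq_norm_sub_inv_card_smul_sum_le (Finset.card_pos.1 (hcard ▸ hk))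
      (prox (w σ)) (z (w σ))
    rw [hcard] at hjensen
    calc env ((k : ℝ)⁻¹ • ∑ i ∈ σ j, z (w σ) i)
        ≤ fbar (prox (w σ)) + ‖prox (w σ) - (k : ℝ)⁻¹ • ∑ i ∈ σ j, z (w σ) i‖ ^ 2 / (2 * ρ) := by
          rw [henv, (hprox _).ciInf_eq_univ]
          exact hprox _ (Set.mem_univ _)
      _ ≤ fbar (prox (w σ)) + (𝔼 i ∈ σ j, h σ i) / (2 * ρ) := by gcongr
      _ = env (w σ) - D σ / (2 * ρ) + (𝔼 i ∈ σ j, h σ i) / (2 * ρ) := by rw [henv_eq]; ring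
  have hresample : 𝔼 σ ∈ P, 𝔼 i ∈ σ j, h σ i = 𝔼 σ ∈ P, 𝔼 i, h σ i := by
    rw [expect_piFinset_apply _ j (fun σ s => 𝔼 i ∈ s, h σ i) fun σ hσ s hs _ => by
      simp only [h, hw σ hσ s hs]]
    exact expect_congr rfl fun σ _ => expect_powersetCard_expect hk hkn _
  have hlocal : ∀ σ ∈ P, 𝔼 i, h σ i ≤ (1 - η / ρ) * D σ + 2 * η ^ 2 * G ^ 2 := fun σ hσ =>
    expect_sq_norm_sub_localProx_le hη hηρ hρν hlip hf hfbar (hprox _) (hz σ hσ)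
  have hgrad : ∀ σ, ‖ρ⁻¹ • (w σ - prox (w σ))‖ ^ 2 = D σ / ρ ^ 2 := fun σ => by
    rw [norm_smul, mul_pow, norm_inv, Real.norm_of_nonneg hρ.le, norm_sub_rev, div_eq_inv_mul,
      inv_pow]
  calc 𝔼 σ ∈ P, env ((k : ℝ)⁻¹ • ∑ i ∈ σ j, z (w σ) i)
      ≤ 𝔼 σ ∈ P, (env (w σ) - D σ / (2 * ρ) + (𝔼 i ∈ σ j, h σ i) / (2 * ρ)) :=
        expect_le_expect hnext
    _ = 𝔼 σ ∈ P, env (w σ) - (𝔼 σ ∈ P, D σ) / (2 * ρ) + (𝔼 σ ∈ P, 𝔼 i, h σ i) / (2 * ρ) := by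
        rw [expect_add_distrib, expect_sub_distrib, ← expect_div, ← expect_div, hresample]
    _ ≤ 𝔼 σ ∈ P, env (w σ) - (𝔼 σ ∈ P, D σ) / (2 * ρ)
          + (𝔼 σ ∈ P, ((1 - η / ρ) * D σ + 2 * η ^ 2 * G ^ 2)) / (2 * ρ) := by
        gcongr with σ hσ; exact hlocal σ hσ
    _ = _ := by
        simp only [hgrad, expect_add_distrib, ← mul_expect, ← expect_div, Finset.expect_const hP]
        field_simp
        ring

lemma sum_range_le_sub_add_of_le_sub_add {a d : ℕ → ℝ} {c : ℝ} {T : ℕ}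
    (h : ∀ t < T, a (t + 1) ≤ a t - d t + c) : ∑ t ∈ range T, d t ≤ a 0 - a T + T * c :=
  calc ∑ t ∈ range T, d t ≤ ∑ t ∈ range T, (a t - a (t + 1) + c) :=
        sum_le_sum fun t ht => by linarith [h t (mem_range.1 ht)]
    _ = a 0 - a T + T * c := by
        rw [sum_add_distrib, sum_range_sub', sum_const, card_range, nsmul_eq_mul]

lemma fedprox_rate_le {T : ℕ} (hT : 0 < T) {ρ η G Δ S : ℝ} (hρ : 0 < ρ)
    (hη : η = ρ / √T) (hΔ : 0 ≤ Δ) (hS : η / 2 * S ≤ Δ + T * (η ^ 2 * G ^ 2 / ρ)) :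
    S / T ≤ Δ / (T * ρ) + (2 * Δ + 4 * G ^ 2 * ρ) / (ρ * √T) := by
  subst hη
  set r := √T
  have hr : 0 < r := Real.sqrt_pos.2 (by exact_mod_cast hT)
  have hT' : (T : ℝ) = r ^ 2 := (Real.sq_sqrt (Nat.cast_nonneg T)).symm
  rw [hT'] at hS ⊢
  calc S / r ^ 2 = 2 / (ρ * r) * (ρ / r / 2 * S) := by field_simp
    _ ≤ 2 / (ρ * r) * (Δ + r ^ 2 * ((ρ / r) ^ 2 * G ^ 2 / ρ)) := by gcongr
    _ = 2 * Δ / (ρ * r) + 2 * G ^ 2 / r := by field_simp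
    _ ≤ Δ / (r ^ 2 * ρ) + (2 * Δ / (ρ * r) + 2 * G ^ 2 / r + 2 * G ^ 2 / r) := by
        have : 0 ≤ Δ / (r ^ 2 * ρ) := by positivity
        have : 0 ≤ 2 * G ^ 2 / r := by positivity
        linarith
    _ = Δ / (r ^ 2 * ρ) + (2 * Δ + 4 * G ^ 2 * ρ) / (ρ * r) := by field_simp; ring

theorem fedprox_nonsmooth_convergence_general
    (p M T I : ℕ) (G ν ρ η : ℝ)
    (hρ0 : 0 < ρ) (hρ : ρ < 1 / (2 * ν))
    (hT : 1 ≤ T) (hI : 1 ≤ I) (hIM : I ≤ M)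
    (hη : η = ρ / Real.sqrt T)
    (R : Fin M → EuclideanSpace ℝ (Fin p) → ℝ)
    -- each local objective is G-Lipschitz and ν-weakly convex
    (hlip : ∀ m u u', |R m u - R m u'| ≤ G * ‖u - u'‖)
    (hwc : ∀ m, ConvexOn ℝ Set.univ (fun u => R m u + (ν / 2) * ‖u‖ ^ 2))
    (Rbar : EuclideanSpace ℝ (Fin p) → ℝ)
    (hRbar : Rbar = fun u => (M : ℝ)⁻¹ * ∑ m, R m u)
    -- ρ-Moreau envelope of R̄ and its proximal mapping / gradient
    (Rρ : EuclideanSpace ℝ (Fin p) → ℝ)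
    (hRρ : ∀ u, Rρ u = ⨅ v, Rbar v + ‖v - u‖ ^ 2 / (2 * ρ))
    (prox : EuclideanSpace ℝ (Fin p) → EuclideanSpace ℝ (Fin p))
    (hprox : ∀ u, IsMinOn (fun v => Rbar v + ‖v - u‖ ^ 2 / (2 * ρ)) Set.univ (prox u))
    -- finiteness of the Moreau-envelope value gap
    (hbdd : BddBelow (Set.range Rρ))
    (w0 : EuclideanSpace ℝ (Fin p))
    -- local updates: exact minimizers of the local proximal objectives
    (wloc : ℕ → Fin M → EuclideanSpace ℝ (Fin p) → EuclideanSpace ℝ (Fin p))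
    (W : (Fin T → Finset (Fin M)) → ℕ → EuclideanSpace ℝ (Fin p))
    (hW0 : ∀ σ, W σ 0 = w0)
    (hWrec : ∀ σ, (∀ s : Fin T, (σ s).card = I) → ∀ t, ∀ ht : t < T,
      W σ (t + 1) = (I : ℝ)⁻¹ • ∑ ξ ∈ σ ⟨t, ht⟩, wloc (t + 1) ξ (W σ t))
    (hexact : ∀ σ, (∀ s : Fin T, (σ s).card = I) → ∀ t, t < T → ∀ m,
      IsMinOn (fun u => R m u + ‖u - W σ t‖ ^ 2 / (2 * η)) Set.univ
        (wloc (t + 1) m (W σ t))) :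
    (T : ℝ)⁻¹ * ∑ t ∈ Finset.range T,
        (((Fintype.piFinset fun _ : Fin T =>
              (Finset.univ : Finset (Fin M)).powersetCard I).card : ℝ)⁻¹ *
          ∑ σ ∈ (Fintype.piFinset fun _ : Fin T =>
              (Finset.univ : Finset (Fin M)).powersetCard I),
            ‖ρ⁻¹ • (W σ t - prox (W σ t))‖ ^ 2)
      ≤ (Rρ w0 - ⨅ u, Rρ u) / (T * ρ)
        + (2 * (Rρ w0 - ⨅ u, Rρ u) + 4 * G ^ 2 * ρ) / (ρ * Real.sqrt T) := by
  set P := Fintype.piFinset fun _ : Fin T => (univ : Finset (Fin M)).powersetCard I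
  have hρν : 2 * ρ * ν < 1 := by
    have := (lt_div_iff₀ (one_div_pos.1 (hρ0.trans hρ))).1 hρ; linarith
  have hη0 : 0 < η := hη ▸ div_pos hρ0 (Real.sqrt_pos.2 (by exact_mod_cast hT))
  have hηρ : η ≤ ρ := hη ▸ div_le_self hρ0.le (Real.one_le_sqrt.2 (by exact_mod_cast hT))
  have hRbar' : ∀ u, Rbar u = 𝔼 m, R m u := fun u => by
    rw [hRbar, Fintype.expect_eq_sum_div_card, Fintype.card_fin, div_eq_inv_mul]
  have hmem : ∀ σ ∈ P, ∀ s, #(σ s) = I := fun σ hσ s =>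
    (mem_powersetCard.1 (Fintype.mem_piFinset.1 hσ s)).2
  have hstep : ∀ t < T, 𝔼 σ ∈ P, Rρ (W σ (t + 1)) ≤ 𝔼 σ ∈ P, Rρ (W σ t)
      - η / 2 * 𝔼 σ ∈ P, ‖ρ⁻¹ • (W σ t - prox (W σ t))‖ ^ 2 + η ^ 2 * G ^ 2 / ρ := by
    intro t ht
    rw [expect_congr rfl fun σ hσ => by rw [hWrec σ (hmem σ hσ) t ht]]
    exact expect_moreau_fedprox_step_le hI (by simpa using hIM) hη0 hηρ hρν hlip hwc hRbar' hRρ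
      hprox ⟨t, ht⟩ (fun σ => W σ t)
      (fun σ hσ _ hs => iterate_update_eq (fun t s w => (I : ℝ)⁻¹ • ∑ ξ ∈ s, wloc (t + 1) ξ w)
        hW0 (fun σ hσ => hWrec σ (hmem σ hσ)) hσ ht hs)
      (fun w m => wloc (t + 1) m w) fun σ hσ m => hexact σ (hmem σ hσ) t ht m
  have hP : P.Nonempty :=
    Fintype.piFinset_nonempty.2 fun _ => powersetCard_nonempty.2 (by simpa using hIM)
  have htel := sum_range_le_sub_add_of_le_sub_add (a := fun t => 𝔼 σ ∈ P, Rρ (W σ t))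
    (d := fun t => η / 2 * 𝔼 σ ∈ P, ‖ρ⁻¹ • (W σ t - prox (W σ t))‖ ^ 2) hstep
  have hinf : ⨅ u, Rρ u ≤ 𝔼 σ ∈ P, Rρ (W σ T) := le_expect hP fun σ _ => ciInf_le hbdd _
  have h0 : 𝔼 σ ∈ P, Rρ (W σ 0) = Rρ w0 := by simp only [hW0, Finset.expect_const hP]
  simp only [inv_mul_eq_div, ← Finset.expect_eq_sum_div_card]
  exact fedprox_rate_le hT hρ0 hη (sub_nonneg.2 (ciInf_le hbdd w0)) (by rw [mul_sum]; linarith)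

/-- Convergence of `FedProx` for non-smooth weakly convex federated
optimization (Theorem 2 of the paper): for `G`-Lipschitz, `ν`-weakly convex local objectives,
`0 < ρ < 1/(2ν)`, `η = ρ/√T`, exact local proximal updates and model averaging over
independent uniformly random size-`I` device subsets,
`(1/T)∑_{t<T} E‖∇R̄_ρ(w_t)‖² ≤ Δ̄_ρ/(Tρ) + (2Δ̄_ρ + 4G²ρ)/(ρ√T)`,
where `R̄_ρ` is the `ρ`-Moreau envelope of `R̄` and `∇R̄_ρ(w) = (w − prox_{ρR̄}(w))/ρ`.
The expectation is realized as the average over all tuples of size-`I` subsets. -/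
theorem fedprox_nonsmooth_convergence
    (p M T I : ℕ) (G ν ρ η : ℝ)
    (hG : 0 ≤ G) (hν : 0 < ν) (hρ0 : 0 < ρ) (hρ : ρ < 1 / (2 * ν))
    (hT : 1 ≤ T) (hI : 1 ≤ I) (hIM : I ≤ M)
    (hη : η = ρ / Real.sqrt T)
    (R : Fin M → EuclideanSpace ℝ (Fin p) → ℝ)
    -- each local objective is G-Lipschitz and ν-weakly convex
    (hlip : ∀ m u u', |R m u - R m u'| ≤ G * ‖u - u'‖)
    (hwc : ∀ m, ConvexOn ℝ Set.univ (fun u => R m u + (ν / 2) * ‖u‖ ^ 2))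
    (Rbar : EuclideanSpace ℝ (Fin p) → ℝ)
    (hRbar : Rbar = fun u => (M : ℝ)⁻¹ * ∑ m, R m u)
    -- ρ-Moreau envelope of R̄ and its proximal mapping / gradient
    (Rρ : EuclideanSpace ℝ (Fin p) → ℝ)
    (hRρ : ∀ u, Rρ u = ⨅ v, Rbar v + ‖v - u‖ ^ 2 / (2 * ρ))
    (prox : EuclideanSpace ℝ (Fin p) → EuclideanSpace ℝ (Fin p))
    (hprox : ∀ u, IsMinOn (fun v => Rbar v + ‖v - u‖ ^ 2 / (2 * ρ)) Set.univ (prox u))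
    (hproxuniq : ∀ u v,
      IsMinOn (fun x => Rbar x + ‖x - u‖ ^ 2 / (2 * ρ)) Set.univ v → v = prox u)
    -- finiteness of the Moreau-envelope value gap
    (hbdd : BddBelow (Set.range Rρ))
    (w0 : EuclideanSpace ℝ (Fin p))
    -- local updates: exact minimizers of the local proximal objectives
    (wloc : ℕ → Fin M → EuclideanSpace ℝ (Fin p) → EuclideanSpace ℝ (Fin p))
    (W : (Fin T → Finset (Fin M)) → ℕ → EuclideanSpace ℝ (Fin p))
    (hW0 : ∀ σ, W σ 0 = w0)
    (hWrec : ∀ σ, (∀ s : Fin T, (σ s).card = I) → ∀ t, ∀ ht : t < T,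
      W σ (t + 1) = (I : ℝ)⁻¹ • ∑ ξ ∈ σ ⟨t, ht⟩, wloc (t + 1) ξ (W σ t))
    (hexact : ∀ σ, (∀ s : Fin T, (σ s).card = I) → ∀ t, t < T → ∀ m,
      IsMinOn (fun u => R m u + ‖u - W σ t‖ ^ 2 / (2 * η)) Set.univ
        (wloc (t + 1) m (W σ t))) :
    (T : ℝ)⁻¹ * ∑ t ∈ Finset.range T,
        (((Fintype.piFinset fun _ : Fin T =>
              (Finset.univ : Finset (Fin M)).powersetCard I).card : ℝ)⁻¹ *
          ∑ σ ∈ (Fintype.piFinset fun _ : Fin T =>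
              (Finset.univ : Finset (Fin M)).powersetCard I),
            ‖ρ⁻¹ • (W σ t - prox (W σ t))‖ ^ 2)
      ≤ (Rρ w0 - ⨅ u, Rρ u) / (T * ρ)
        + (2 * (Rρ w0 - ⨅ u, Rρ u) + 4 * G ^ 2 * ρ) / (ρ * Real.sqrt T) :=
  fedprox_nonsmooth_convergence_general p M T I G ν ρ η hρ0 hρ hT hI hIM hη R hlip hwc Rbar hRbar Rρ
    hRρ prox hprox hbdd w0 wloc W hW0 hWrec hexact
end

section
/- Let 𝒵 be a set, let ℓ : ℝ^p × 𝒵 → ℝ be such that w ↦ ℓ(w; z) is G-Lipschitz for every z ∈ 𝒵, and let r : ℝ^p → ℝ. For a dataset S = (z₁,…,z_N) ∈ 𝒵^N define R_S^r(w) = (1/N)∑_{i=1}^N ℓ(w; z_i) + r(w), and assume that for every dataset S the function R_S^r is λ-strongly convex and attains its minimum at a unique point w*_S. Then for any two datasets S, S' ∈ 𝒵^N that differ in exactly one entry, ‖w*_S − w*_{S'}‖ ≤ 4G/(λN). -/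
/-!
Write `u = w*_S` and `v = w*_{S'}`. A `λ`-strongly convex function grows at least like
`λ/4 · ‖w - w₀‖²` away from its minimizer `w₀`, so
`R_S(v) - R_S(u) ≥ λ/4 ‖u - v‖²` and `R_{S'}(u) - R_{S'}(v) ≥ λ/4 ‖u - v‖²`.
Adding, `λ/2 ‖u - v‖²` is bounded by the increment of `R_S - R_{S'}` between `u` and `v`.
Since the datasets differ in one entry, `R_S - R_{S'} = (ℓ(·; z_i) - ℓ(·; z'_i)) / N` is
`2G/N`-Lipschitz, whence `‖u - v‖ ≤ 4G/(λN)`.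
-/

section StrongConvexity

variable {E : Type*} [NormedAddCommGroup E] [NormedSpace ℝ E] {s : Set E} {m : ℝ}

/-- The midpoint argument gives the constant `m / 4` rather than the sharp `m / 2`. -/
lemma StrongConvexOn.add_mul_sq_norm_sub_le_of_isMinOn {f : E → ℝ} {x₀ x : E}
    (hf : StrongConvexOn s m f) (hx₀ : x₀ ∈ s) (hmin : IsMinOn f s x₀) (hx : x ∈ s) :
    f x₀ + m / 4 * ‖x - x₀‖ ^ 2 ≤ f x := by
  have hmid := hf.2 hx hx₀ (by norm_num : (0 : ℝ) ≤ 1 / 2) (by norm_num : (0 : ℝ) ≤ 1 / 2)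
    (by norm_num)
  have hle : f x₀ ≤ f ((1 / 2 : ℝ) • x + (1 / 2 : ℝ) • x₀) :=
    hmin (hf.1 hx hx₀ (by norm_num) (by norm_num) (by norm_num))
  simp only [smul_eq_mul] at hmid
  linarith

lemma StrongConvexOn.norm_sub_le_of_isMinOn {f g : E → ℝ} {u v : E} {L : ℝ}
    (hf : StrongConvexOn s m f) (hg : StrongConvexOn s m g) (hm : 0 < m) (hL : 0 ≤ L)
    (hu : u ∈ s) (hv : v ∈ s) (hfu : IsMinOn f s u) (hgv : IsMinOn g s v)
    (hfg : ∀ x ∈ s, ∀ y ∈ s, (f x - g x) - (f y - g y) ≤ L * ‖x - y‖) :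
    ‖u - v‖ ≤ 2 * L / m := by
  have growth_f := hf.add_mul_sq_norm_sub_le_of_isMinOn hu hfu hv
  have growth_g := hg.add_mul_sq_norm_sub_le_of_isMinOn hv hgv hu
  have increment := hfg v hv u hu
  rw [norm_sub_rev v u] at growth_f increment
  have sq_le_linear : m / 2 * ‖u - v‖ ^ 2 ≤ L * ‖u - v‖ := by linarith
  rw [le_div_iff₀ hm]
  rcases (norm_nonneg (u - v)).eq_or_lt with h0 | hpos
  · rw [← h0]
    linarith
  · nlinarith

end StrongConvexity

theorem exact_regularized_erm_stability_general
    {Z : Type*} (p N : ℕ) (G lam : ℝ)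
    (hG : 0 ≤ G) (hlam : 0 < lam)
    (ℓ : EuclideanSpace ℝ (Fin p) → Z → ℝ) (r : EuclideanSpace ℝ (Fin p) → ℝ)
    (hlip : ∀ z w w', |ℓ w z - ℓ w' z| ≤ G * ‖w - w'‖)
    (Rr : (Fin N → Z) → EuclideanSpace ℝ (Fin p) → ℝ)
    (hRr : ∀ S w, Rr S w = (N : ℝ)⁻¹ * ∑ i, ℓ w (S i) + r w)
    (hsc : ∀ S, ConvexOn ℝ Set.univ (fun w => Rr S w - (lam / 2) * ‖w‖ ^ 2))
    (wstar : (Fin N → Z) → EuclideanSpace ℝ (Fin p))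
    (hmin : ∀ S, IsMinOn (Rr S) Set.univ (wstar S))
    (S S' : Fin N → Z) (i : Fin N) (hdiff : ∀ j, j ≠ i → S j = S' j) :
    ‖wstar S - wstar S'‖ ≤ 4 * G / (lam * N) := by
  have hRr_sub : ∀ w, Rr S w - Rr S' w = (N : ℝ)⁻¹ * (ℓ w (S i) - ℓ w (S' i)) := by
    intro w
    rw [hRr, hRr, add_sub_add_right_eq_sub, ← mul_sub, ← Finset.sum_sub_distrib,
      Fintype.sum_eq_single i fun j hj => by rw [hdiff j hj, sub_self]]
  have hRr_sub_lip : ∀ x ∈ Set.univ, ∀ y ∈ Set.univ,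
      (Rr S x - Rr S' x) - (Rr S y - Rr S' y) ≤ 2 * G / N * ‖x - y‖ := by
    intro x _ y _
    have h₁ := (abs_le.mp (hlip (S i) x y)).2
    have h₂ := (abs_le.mp (hlip (S' i) x y)).1
    rw [hRr_sub, hRr_sub, ← mul_sub, div_eq_mul_inv, mul_right_comm, mul_comm _ (N : ℝ)⁻¹]
    exact mul_le_mul_of_nonneg_left (by linarith) (by positivity)
  calc ‖wstar S - wstar S'‖
      ≤ 2 * (2 * G / N) / lam :=
        (strongConvexOn_iff_convex.mpr (hsc S)).norm_sub_le_of_isMinOn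
          (strongConvexOn_iff_convex.mpr (hsc S')) hlam (by positivity) trivial trivial
          (hmin S) (hmin S') hRr_sub_lip
    _ = 4 * G / (lam * N) := by ring

/-- Uniform argument stability of exact regularized ERM: if each
`R_S^r(w) = (1/N)∑ᵢ ℓ(w; zᵢ) + r(w)` is `λ`-strongly convex with unique minimizer `w*_S`, and
every loss `ℓ(·; z)` is `G`-Lipschitz, then datasets differing in one entry give
`‖w*_S − w*_{S'}‖ ≤ 4G/(λN)`. -/
theorem exact_regularized_erm_stability
    {Z : Type*} (p N : ℕ) (hN : 0 < N) (G lam : ℝ)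
    (hG : 0 ≤ G) (hlam : 0 < lam)
    (ℓ : EuclideanSpace ℝ (Fin p) → Z → ℝ) (r : EuclideanSpace ℝ (Fin p) → ℝ)
    (hlip : ∀ z w w', |ℓ w z - ℓ w' z| ≤ G * ‖w - w'‖)
    (Rr : (Fin N → Z) → EuclideanSpace ℝ (Fin p) → ℝ)
    (hRr : ∀ S w, Rr S w = (N : ℝ)⁻¹ * ∑ i, ℓ w (S i) + r w)
    (hsc : ∀ S, ConvexOn ℝ Set.univ (fun w => Rr S w - (lam / 2) * ‖w‖ ^ 2))
    (wstar : (Fin N → Z) → EuclideanSpace ℝ (Fin p))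
    (hmin : ∀ S, IsMinOn (Rr S) Set.univ (wstar S))
    (huniq : ∀ S w, IsMinOn (Rr S) Set.univ w → w = wstar S)
    (S S' : Fin N → Z) (i : Fin N) (hdiff : ∀ j, j ≠ i → S j = S' j) :
    ‖wstar S - wstar S'‖ ≤ 4 * G / (lam * N) :=
  exact_regularized_erm_stability_general p N G lam hG hlam ℓ r hlip Rr hRr hsc wstar hmin S S' i
    hdiff
end

section
/- Let Z₁,…,Z_N be i.i.d. random variables taking values in a measurable space 𝒵 and let H be a separable Hilbert space. Suppose h : 𝒵^N → H is measurable, Bochner square-integrable with respect to the law of S = (Z₁,…,Z_N), and satisfies the β-bounded differences property: for every i ∈ {1,…,N} and all z₁,…,z_N, z'_i ∈ 𝒵, ‖h(z₁,…,z_{i−1}, z_i, z_{i+1},…,z_N) − h(z₁,…,z_{i−1}, z'_i, z_{i+1},…,z_N)‖ ≤ β. Then E[‖h(S) − E[h(S)]‖²] ≤ β²·N. -/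
/-!
Split off the first coordinate: by the law of total variance, the variance of `h` is the mean
variance of `h` in the first coordinate plus the variance of the average `g` of `h` over the first
coordinate. In the first coordinate `h` oscillates by at most `β`, so it stays within `β` of its
mean and that variance is at most `β²`; and `g` again has `β`-bounded differences, now in `N - 1`
coordinates, so induction applies. Telescoping the bounded differences shows that `h` is bounded,
which provides every integrability condition along the way.
-/

open MeasureTheory RealInnerProductSpace

section Variance

variable {α E H : Type*} [MeasurableSpace α] {μ : Measure α} [IsProbabilityMeasure μ]
  [NormedAddCommGroup E] [NormedSpace ℝ E] [CompleteSpace E]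
  [NormedAddCommGroup H] [InnerProductSpace ℝ H] [CompleteSpace H]

-- Nonnegativity also covers a non-integrable `f`, whose integral is `0`.
lemma integral_le_of_nonneg_of_le {f : α → ℝ} {C : ℝ} (hf₀ : ∀ x, 0 ≤ f x) (hfC : ∀ x, f x ≤ C) :
    ∫ x, f x ∂μ ≤ C := by
  have hnorm : ∀ x, ‖f x‖ ≤ C := fun x => (Real.norm_of_nonneg (hf₀ x)).trans_le (hfC x)
  simpa using (le_abs_self _).trans (norm_integral_le_of_norm_le_const (μ := μ) (ae_of_all _ hnorm))

lemma norm_sub_integral_le {f : α → E} {β : ℝ} (hf : Integrable f μ)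
    (hβ : ∀ x y, ‖f x - f y‖ ≤ β) (x : α) : ‖f x - ∫ y, f y ∂μ‖ ≤ β := by
  have hrepr : f x - ∫ y, f y ∂μ = ∫ y, (f x - f y) ∂μ := by
    rw [integral_sub (integrable_const _) hf, integral_const, probReal_univ, one_smul]
  simpa [hrepr] using norm_integral_le_of_norm_le_const (μ := μ) (ae_of_all _ (hβ x))

lemma integral_norm_sub_integral_sq_le_of_norm_sub_le {f : α → E} {β : ℝ} (hf : Integrable f μ)
    (hβ : ∀ x y, ‖f x - f y‖ ≤ β) : ∫ x, ‖f x - ∫ y, f y ∂μ‖ ^ 2 ∂μ ≤ β ^ 2 :=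
  integral_le_of_nonneg_of_le (fun _ => by positivity)
    fun x => pow_le_pow_left₀ (norm_nonneg _) (norm_sub_integral_le hf hβ x) 2

lemma integral_norm_sub_sq_eq {f : α → H} (hf : MemLp f 2 μ) (c : H) :
    ∫ x, ‖f x - c‖ ^ 2 ∂μ = ∫ x, ‖f x - ∫ y, f y ∂μ‖ ^ 2 ∂μ + ‖∫ y, f y ∂μ - c‖ ^ 2 := by
  set m := ∫ y, f y ∂μ
  have hcentered : Integrable (fun x => f x - m) μ :=
    (hf.integrable one_le_two).sub (integrable_const _)
  have hsq : Integrable (fun x => ‖f x - m‖ ^ 2) μ :=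
    (hf.sub (memLp_const m)).integrable_norm_pow two_ne_zero
  have hcross : ∫ x, ⟪m - c, f x - m⟫ ∂μ = 0 := by
    rw [integral_inner hcentered, integral_sub (hf.integrable one_le_two) (integrable_const _),
      integral_const, probReal_univ, one_smul, sub_self, inner_zero_right]
  calc ∫ x, ‖f x - c‖ ^ 2 ∂μ
      = ∫ x, (‖f x - m‖ ^ 2 + 2 * ⟪m - c, f x - m⟫ + ‖m - c‖ ^ 2) ∂μ := by
        refine integral_congr_ae (ae_of_all _ fun x => ?_)
        dsimp only
        rw [real_inner_comm, ← norm_add_sq_real, sub_add_sub_cancel]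
    _ = ∫ x, ‖f x - m‖ ^ 2 ∂μ + ‖m - c‖ ^ 2 := by
        have hcross_int : Integrable (fun x => 2 * ⟪m - c, f x - m⟫) μ :=
          (hcentered.const_inner _).const_mul 2
        rw [integral_add (f := fun x => ‖f x - m‖ ^ 2 + 2 * ⟪m - c, f x - m⟫)
            (hsq.add hcross_int) (integrable_const _), integral_add hsq hcross_int,
          integral_const_mul, hcross]
        simp

end Variance

section TotalVariance

variable {α β H : Type*} [MeasurableSpace α] [MeasurableSpace β]
  {μ : Measure α} {ν : Measure β} [IsProbabilityMeasure μ] [IsProbabilityMeasure ν]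
  [NormedAddCommGroup H] [InnerProductSpace ℝ H] [CompleteSpace H]

theorem integral_norm_sub_integral_sq_prod {f : α × β → H} (hf : StronglyMeasurable f) {C : ℝ}
    (hfC : ∀ p, ‖f p‖ ≤ C) :
    ∫ p, ‖f p - ∫ q, f q ∂μ.prod ν‖ ^ 2 ∂μ.prod ν =
      ∫ y, ∫ x, ‖f (x, y) - ∫ x', f (x', y) ∂μ‖ ^ 2 ∂μ ∂ν +
        ∫ y, ‖∫ x, f (x, y) ∂μ - ∫ y', ∫ x, f (x, y') ∂μ ∂ν‖ ^ 2 ∂ν := by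
  set g : β → H := fun y => ∫ x, f (x, y) ∂μ
  set m := ∫ q, f q ∂μ.prod ν
  have hf_memLp : MemLp f 2 (μ.prod ν) := .of_bound hf.aestronglyMeasurable C (ae_of_all _ hfC)
  have hslice : ∀ y, MemLp (fun x => f (x, y)) 2 μ := fun y =>
    .of_bound (hf.comp_measurable measurable_prodMk_right).aestronglyMeasurable C
      (ae_of_all _ fun _ => hfC _)
  have hg : MemLp g 2 ν :=
    .of_bound hf.integral_prod_left'.aestronglyMeasurable C (ae_of_all _ fun y => by
      simpa using norm_integral_le_of_norm_le_const (μ := μ) (ae_of_all _ fun x => hfC (x, y)))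
  have hm : m = ∫ y, g y ∂ν := integral_prod_symm f (hf_memLp.integrable one_le_two)
  have hsq : Integrable (fun p => ‖f p - m‖ ^ 2) (μ.prod ν) :=
    (hf_memLp.sub (memLp_const m)).integrable_norm_pow two_ne_zero
  have hbetween : Integrable (fun y => ‖g y - m‖ ^ 2) ν :=
    (hg.sub (memLp_const m)).integrable_norm_pow two_ne_zero
  have hwithin : Integrable (fun y => ∫ x, ‖f (x, y) - g y‖ ^ 2 ∂μ) ν := by
    refine (hsq.integral_prod_right.sub hbetween).congr (ae_of_all _ fun y => ?_)
    simp only [Pi.sub_apply, integral_norm_sub_sq_eq (hslice y) m, g, add_sub_cancel_right]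
  rw [integral_prod_symm _ hsq, ← hm, ← integral_add hwithin hbetween]
  exact integral_congr_ae (ae_of_all _ fun y => integral_norm_sub_sq_eq (hslice y) m)

end TotalVariance

theorem measurable_fin_cons {Z : Type*} [MeasurableSpace Z] {n : ℕ} :
    Measurable fun p : Z × (Fin n → Z) => (Fin.cons p.1 p.2 : Fin (n + 1) → Z) :=
  measurable_pi_iff.2 fun j => Fin.cases (by simpa using measurable_fst)
    (fun i => by simpa using measurable_snd.eval) j

theorem integral_pi_fin_succ {Z E : Type*} [MeasurableSpace Z] [NormedAddCommGroup E]
    [NormedSpace ℝ E] (μ : Measure Z) [SigmaFinite μ] {n : ℕ} (F : (Fin (n + 1) → Z) → E) :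
    ∫ s, F s ∂Measure.pi (fun _ => μ) =
      ∫ p : Z × (Fin n → Z), F (Fin.cons p.1 p.2) ∂μ.prod (Measure.pi fun _ => μ) := by
  rw [← ((measurePreserving_piFinSuccAbove (fun _ => μ) 0).symm).integral_comp']
  simp_rw [MeasurableEquiv.piFinSuccAbove_symm_apply, Fin.insertNthEquiv, Fin.insertNth_zero',
    Equiv.coe_fn_mk]

def HasBoundedDifferences {ι Z E : Type*} [DecidableEq ι] [Norm E] [Sub E]
    (f : (ι → Z) → E) (β : ℝ) : Prop :=
  ∀ (i : ι) (s : ι → Z) (z' : Z), ‖f s - f (Function.update s i z')‖ ≤ β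

namespace HasBoundedDifferences

variable {Z E : Type*} {n : ℕ} {β : ℝ}

section Seminormed

variable [SeminormedAddCommGroup E]

theorem comp_cons {f : (Fin (n + 1) → Z) → E} (hf : HasBoundedDifferences f β) (z : Z) :
    HasBoundedDifferences (fun y => f (Fin.cons z y)) β := fun i y z' => by
  simpa only [Fin.cons_update] using hf i.succ (Fin.cons z y) z'

theorem norm_sub_cons_le {f : (Fin (n + 1) → Z) → E} (hf : HasBoundedDifferences f β)
    (z z' : Z) (y : Fin n → Z) : ‖f (Fin.cons z y) - f (Fin.cons z' y)‖ ≤ β := by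
  simpa only [Fin.update_cons_zero] using hf 0 (Fin.cons z y) z'

theorem norm_sub_le {f : (Fin n → Z) → E} (hf : HasBoundedDifferences f β) (s t : Fin n → Z) :
    ‖f s - f t‖ ≤ n * β := by
  induction n with
  | zero => simp [Subsingleton.elim s t]
  | succ n ih =>
    rw [← Fin.cons_self_tail s, ← Fin.cons_self_tail t]
    calc ‖f (Fin.cons (s 0) (Fin.tail s)) - f (Fin.cons (t 0) (Fin.tail t))‖
        ≤ ‖f (Fin.cons (s 0) (Fin.tail s)) - f (Fin.cons (t 0) (Fin.tail s))‖
          + ‖f (Fin.cons (t 0) (Fin.tail s)) - f (Fin.cons (t 0) (Fin.tail t))‖ :=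
          norm_sub_le_norm_sub_add_norm_sub _ _ _
      _ ≤ β + n * β := add_le_add (hf.norm_sub_cons_le _ _ _) (ih (hf.comp_cons _) _ _)
      _ = (n + 1 : ℕ) * β := by push_cast; ring

end Seminormed

variable [MeasurableSpace Z] {μ : Measure Z} [IsProbabilityMeasure μ]
  [NormedAddCommGroup E] [NormedSpace ℝ E]

theorem integral_cons {f : (Fin (n + 1) → Z) → E} (hf : HasBoundedDifferences f β)
    (hint : ∀ y, Integrable (fun z => f (Fin.cons z y)) μ) :
    HasBoundedDifferences (fun y => ∫ z, f (Fin.cons z y) ∂μ) β := fun i y z' => by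
  rw [← integral_sub (hint y) (hint _)]
  simpa using
    norm_integral_le_of_norm_le_const (μ := μ) (ae_of_all _ fun z => hf.comp_cons z i y z')

variable {H : Type*} [NormedAddCommGroup H] [InnerProductSpace ℝ H] [CompleteSpace H]

theorem integral_norm_sub_integral_sq_le {f : (Fin n → Z) → H}
    (hf : HasBoundedDifferences f β) (hmeas : StronglyMeasurable f) :
    ∫ s, ‖f s - ∫ s', f s' ∂Measure.pi (fun _ => μ)‖ ^ 2 ∂Measure.pi (fun _ => μ) ≤ β ^ 2 * n := by
  induction n with
  | zero =>
    have hcentered : ∀ s : Fin 0 → Z, f s - ∫ s', f s' ∂Measure.pi (fun _ => μ) = 0 := fun s => by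
      simp [Subsingleton.elim _ s]
    simp [hcentered]
  | succ n ih =>
    obtain ⟨z₀⟩ : Nonempty Z := μ.nonempty_of_neZero
    set F : Z × (Fin n → Z) → H := fun p => f (Fin.cons p.1 p.2)
    have hF : StronglyMeasurable F := hmeas.comp_measurable measurable_fin_cons
    have hF_bdd : ∀ p, ‖F p‖ ≤ ‖f fun _ => z₀‖ + (n + 1 : ℕ) * β := fun p =>
      (norm_le_norm_add_norm_sub' _ _).trans (add_le_add le_rfl (hf.norm_sub_le _ _))
    have hslice : ∀ y, Integrable (fun z => F (z, y)) μ := fun y =>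
      .of_bound (hF.comp_measurable measurable_prodMk_right).aestronglyMeasurable _
        (ae_of_all _ fun _ => hF_bdd _)
    have hwithin : ∀ y, ∫ z, ‖F (z, y) - ∫ z', F (z', y) ∂μ‖ ^ 2 ∂μ ≤ β ^ 2 := fun y =>
      integral_norm_sub_integral_sq_le_of_norm_sub_le (hslice y) fun z z' =>
        hf.norm_sub_cons_le z z' y
    have hbetween := ih (hf.integral_cons hslice) hF.integral_prod_left'
    rw [integral_pi_fin_succ, integral_pi_fin_succ, integral_norm_sub_integral_sq_prod hF hF_bdd]
    calc _ ≤ β ^ 2 + β ^ 2 * n :=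
          add_le_add (integral_le_of_nonneg_of_le (fun _ => integral_nonneg fun _ => by positivity)
            hwithin) hbetween
      _ = β ^ 2 * (n + 1 : ℕ) := by push_cast; ring

end HasBoundedDifferences

theorem efron_stein_hilbert_general
    {Z : Type*} [MeasurableSpace Z]
    {H : Type*} [NormedAddCommGroup H] [InnerProductSpace ℝ H] [CompleteSpace H]
    [MeasurableSpace H] [BorelSpace H] [SecondCountableTopology H]
    (N : ℕ) (μ : Measure Z) [IsProbabilityMeasure μ]
    (h : (Fin N → Z) → H) (β : ℝ)
    (hmeas : Measurable h)
    (hbd : ∀ (i : Fin N) (s : Fin N → Z) (z' : Z),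
      ‖h s - h (Function.update s i z')‖ ≤ β) :
    ∫ s, ‖h s - ∫ s', h s' ∂(Measure.pi fun _ : Fin N => μ)‖ ^ 2
        ∂(Measure.pi fun _ : Fin N => μ)
      ≤ β ^ 2 * N :=
  HasBoundedDifferences.integral_norm_sub_integral_sq_le hbd hmeas.stronglyMeasurable

/-- Efron–Stein inequality for Hilbert-space-valued functions: if
`h : 𝒵^N → H` is measurable, Bochner square-integrable w.r.t. the i.i.d. product law, and has
the `β`-bounded differences property, then `E‖h(S) − E[h(S)]‖² ≤ β²N`. -/
theorem efron_stein_hilbert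
    {Z : Type*} [MeasurableSpace Z]
    {H : Type*} [NormedAddCommGroup H] [InnerProductSpace ℝ H] [CompleteSpace H]
    [MeasurableSpace H] [BorelSpace H] [SecondCountableTopology H]
    (N : ℕ) (μ : Measure Z) [IsProbabilityMeasure μ]
    (h : (Fin N → Z) → H) (β : ℝ)
    (hmeas : Measurable h)
    (hL2 : MemLp h 2 (Measure.pi fun _ : Fin N => μ))
    (hbd : ∀ (i : Fin N) (s : Fin N → Z) (z' : Z),
      ‖h s - h (Function.update s i z')‖ ≤ β) :
    ∫ s, ‖h s - ∫ s', h s' ∂(Measure.pi fun _ : Fin N => μ)‖ ^ 2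
        ∂(Measure.pi fun _ : Fin N => μ)
      ≤ β ^ 2 * N :=
  efron_stein_hilbert_general N μ h β hmeas hbd
end

section
/- Let (𝒵, 𝒟) be a probability space and ℓ : ℝ^p × 𝒵 → ℝ a measurable loss such that for every z the map w ↦ ℓ(w; z) is G-Lipschitz and L-smooth. Define R(w) = E_{Z∼𝒟}[ℓ(w; Z)]. Fix a center w₀ ∈ ℝ^p, b ≥ 1, 0 < η < 1/L, and ε with 0 ≤ ε ≤ G²η/(8b²). Let B = (Z₁,…,Z_b) be an i.i.d. sample from 𝒟, let R_B(w) = (1/b)∑_{i=1}^b ℓ(w; Z_i), and let w_B be a measurable selection of ε-inexact minimizers of w ↦ R_B(w) + ‖w − w₀‖²/(2η). Then ‖E_B[∇R(w_B) − ∇R_B(w_B)]‖ ≤ 5LGη/((1 − ηL)·b). -/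
/-!
Replacing one sample of the minibatch perturbs the objective `R_B + ‖· - w₀‖²/(2η)` by a
`2G/b`-Lipschitz function, while `L`-smoothness makes the objective `(1/η - L)`-strongly convex in
the midpoint sense. Comparing the two near-minimisers with their midpoint shows that the inexact
proximal point moves by at most `5Gη/((1 - ηL)b)`, and `∇ℓ(·; Z_i)` by at most `L` times that.
Since `∇R(w) = E_{Z'} ∇ℓ(w; Z')` for an independent ghost sample `Z'`, exchanging `Z'` with `Z_i`
writes the bias as the average over `i` of `E[∇ℓ(w_{B^{(i ← Z')}}; Z_i) - ∇ℓ(w_B; Z_i)]`.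
-/

open MeasureTheory Finset Filter Topology
open scoped RealInnerProductSpace

section LipschitzGradient

variable {E : Type*} [NormedAddCommGroup E] [InnerProductSpace ℝ E] [CompleteSpace E]
  {f : E → ℝ} {L : ℝ}

lemma add_inner_gradient_sub_le_of_lipschitz_gradient (hf : Differentiable ℝ f)
    (hsm : ∀ x y, ‖gradient f x - gradient f y‖ ≤ L * ‖x - y‖) (m u : E) :
    f m + ⟪gradient f m, u - m⟫ - L / 2 * ‖u - m‖ ^ 2 ≤ f u := by
  set d := u - m
  -- By Cauchy–Schwarz and smoothness, `ψ` has a nonnegative derivative on `[0, 1]`.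
  set ψ : ℝ → ℝ := fun t => f (m + t • d) - t * ⟪gradient f m, d⟫ + L / 2 * t ^ 2 * ‖d‖ ^ 2
  have hψ' : ∀ t : ℝ, HasDerivAt ψ
      (⟪gradient f (m + t • d) - gradient f m, d⟫ + L * t * ‖d‖ ^ 2) t := by
    intro t
    have hline : HasDerivAt (fun t : ℝ => m + t • d) d t := by
      simpa using ((hasDerivAt_id t).smul_const d).const_add m
    have hf_line := (hf (m + t • d)).hasFDerivAt.comp_hasDerivAt t hline
    rw [← inner_gradient_left] at hf_line
    have := (hf_line.sub ((hasDerivAt_id t).mul_const ⟪gradient f m, d⟫)).add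
      (((hasDerivAt_pow 2 t).const_mul (L / 2)).mul_const (‖d‖ ^ 2))
    refine this.congr_deriv ?_
    rw [inner_sub_left]
    push_cast
    ring
  have hmono : MonotoneOn ψ (Set.Icc 0 1) := by
    refine monotoneOn_of_hasDerivWithinAt_nonneg (convex_Icc 0 1)
      (fun t _ => (hψ' t).continuousAt.continuousWithinAt)
      (fun t _ => (hψ' t).hasDerivWithinAt) fun t ht => ?_
    rw [interior_Icc] at ht
    have hgrad : ‖gradient f (m + t • d) - gradient f m‖ ≤ L * (t * ‖d‖) := by
      simpa [norm_smul, abs_of_pos ht.1] using hsm (m + t • d) m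
    nlinarith [neg_abs_le ⟪gradient f (m + t • d) - gradient f m, d⟫,
      abs_real_inner_le_norm (gradient f (m + t • d) - gradient f m) d, norm_nonneg d]
  have h01 := hmono (by norm_num) (by norm_num) zero_le_one
  simp only [ψ, zero_smul, add_zero, one_smul, d, add_sub_cancel] at h01
  linarith

lemma apply_midpoint_le_of_lipschitz_gradient (hf : Differentiable ℝ f)
    (hsm : ∀ x y, ‖gradient f x - gradient f y‖ ≤ L * ‖x - y‖) (u v : E) :
    f (midpoint ℝ u v) ≤ (f u + f v) / 2 + L / 8 * ‖u - v‖ ^ 2 := by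
  set m := midpoint ℝ u v
  have hu := add_inner_gradient_sub_le_of_lipschitz_gradient hf hsm m u
  have hv := add_inner_gradient_sub_le_of_lipschitz_gradient hf hsm m v
  have hinner : ⟪gradient f m, u - m⟫ + ⟪gradient f m, v - m⟫ = 0 := by
    rw [← inner_add_right, left_sub_midpoint, right_sub_midpoint, ← smul_add,
      sub_add_sub_cancel', sub_self, smul_zero, inner_zero_right]
  have hnorm : ‖u - m‖ = ‖u - v‖ / 2 ∧ ‖v - m‖ = ‖u - v‖ / 2 := by
    simp only [← dist_eq_norm, m, dist_left_midpoint, dist_right_midpoint, Real.norm_two]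
    constructor <;> ring
  rw [hnorm.1] at hu
  rw [hnorm.2] at hv
  nlinarith

end LipschitzGradient

section Prox

variable {E : Type*} [NormedAddCommGroup E]

def IsInexactMinimizer (Q : E → ℝ) (ε : ℝ) (u : E) : Prop :=
  Q u ≤ (⨅ w, Q w) + ε

noncomputable def proxObjective (f : E → ℝ) (w₀ : E) (η : ℝ) (w : E) : ℝ :=
  f w + ‖w - w₀‖ ^ 2 / (2 * η)

variable {f : E → ℝ} {w₀ : E} {η ε : ℝ}

lemma IsInexactMinimizer.proxObjective_le_add {G : ℝ}
    (hlip : ∀ w w', |f w - f w'| ≤ G * ‖w - w'‖) (hη : 0 < η) {u : E}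
    (hu : IsInexactMinimizer (proxObjective f w₀ η) ε u) (w : E) :
    proxObjective f w₀ η u ≤ proxObjective f w₀ η w + ε := by
  have hbdd : BddBelow (Set.range (proxObjective f w₀ η)) := by
    refine ⟨f w₀ - G ^ 2 * η / 2, ?_⟩
    rintro _ ⟨w, rfl⟩
    have hsq : 0 ≤ (‖w - w₀‖ - G * η) ^ 2 / (2 * η) := by positivity
    have : G * ‖w - w₀‖ ≤ ‖w - w₀‖ ^ 2 / (2 * η) + G ^ 2 * η / 2 := by
      field_simp at hsq ⊢
      nlinarith
    simp only [proxObjective]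
    linarith [neg_abs_le (f w - f w₀), hlip w w₀]
  exact hu.trans (by linarith [ciInf_le hbdd w])

variable [InnerProductSpace ℝ E] [CompleteSpace E] {L : ℝ}

lemma proxObjective_midpoint_le (hf : Differentiable ℝ f)
    (hsm : ∀ x y, ‖gradient f x - gradient f y‖ ≤ L * ‖x - y‖) (hη : 0 < η) (u v : E) :
    proxObjective f w₀ η (midpoint ℝ u v)
      ≤ (proxObjective f w₀ η u + proxObjective f w₀ η v) / 2
        - (1 - η * L) / (8 * η) * ‖u - v‖ ^ 2 := by
  have hf_mid := apply_midpoint_le_of_lipschitz_gradient hf hsm u v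
  have hquad := EuclideanGeometry.dist_sq_add_dist_sq_eq_two_mul_dist_midpoint_sq_add_half_dist_sq
    w₀ u v
  simp only [dist_comm w₀, dist_eq_norm] at hquad
  simp only [proxObjective]
  field_simp
  nlinarith

lemma norm_sub_sq_le_of_proxObjective_le_add {f₁ f₂ : E → ℝ} {κ : ℝ}
    (hf₁ : Differentiable ℝ f₁) (hsm₁ : ∀ x y, ‖gradient f₁ x - gradient f₁ y‖ ≤ L * ‖x - y‖)
    (hf₂ : Differentiable ℝ f₂) (hsm₂ : ∀ x y, ‖gradient f₂ x - gradient f₂ y‖ ≤ L * ‖x - y‖)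
    (hη : 0 < η) {u v : E}
    (hu : ∀ w, proxObjective f₁ w₀ η u ≤ proxObjective f₁ w₀ η w + ε)
    (hv : ∀ w, proxObjective f₂ w₀ η v ≤ proxObjective f₂ w₀ η w + ε)
    (hκ : (f₁ v - f₂ v) - (f₁ u - f₂ u) ≤ κ * ‖u - v‖) :
    (1 - η * L) / (2 * η) * ‖u - v‖ ^ 2 ≤ κ * ‖u - v‖ + 4 * ε := by
  have h₁ := (hu (midpoint ℝ u v)).trans
    (add_le_add_left (proxObjective_midpoint_le hf₁ hsm₁ hη u v) ε)
  have h₂ := (hv (midpoint ℝ u v)).trans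
    (add_le_add_left (proxObjective_midpoint_le hf₂ hsm₂ hη u v) ε)
  simp only [proxObjective] at h₁ h₂
  have : (1 - η * L) / (2 * η) = 4 * ((1 - η * L) / (8 * η)) := by field_simp; ring
  rw [this]
  linarith

end Prox

-- The positive root of `a s² = 4 g s + g²` is `(2 + √(4 + a)) g / a ≤ 5 g / a`.
lemma le_five_mul_div_of_mul_sq_le {a g s : ℝ} (ha : 0 < a) (ha₁ : a ≤ 1) (hg : 0 ≤ g)
    (h : a * s ^ 2 ≤ 4 * g * s + g ^ 2) : s ≤ 5 * g / a := by
  rw [le_div_iff₀ ha]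
  by_contra! hlt
  nlinarith [mul_pos (sub_pos.2 hlt) (show 0 < s * a + g by nlinarith)]

lemma norm_inv_smul_sum_le {F : Type*} [SeminormedAddCommGroup F] [NormedSpace ℝ F] {n : ℕ}
    (hn : 0 < n) {a : Fin n → F} {C : ℝ} (ha : ∀ i, ‖a i‖ ≤ C) :
    ‖(n : ℝ)⁻¹ • ∑ i, a i‖ ≤ C := by
  have hsum : ‖∑ i, a i‖ ≤ n * C := by
    simpa using (norm_sum_le _ _).trans (Finset.sum_le_card_nsmul univ _ C fun i _ => ha i)
  rw [norm_smul, norm_inv, Real.norm_natCast, inv_mul_le_iff₀ (by positivity)]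
  exact hsum

section EmpiricalRisk

variable {E Z : Type*} {n : ℕ}

noncomputable def empiricalRisk (ℓ : E → Z → ℝ) (β : Fin n → Z) (w : E) : ℝ :=
  (n : ℝ)⁻¹ * ∑ i, ℓ w (β i)

variable (ℓ : E → Z → ℝ)

lemma empiricalRisk_update_sub (β : Fin n → Z) (i : Fin n) (z : Z) (w : E) :
    empiricalRisk ℓ (Function.update β i z) w - empiricalRisk ℓ β w
      = (n : ℝ)⁻¹ * (ℓ w z - ℓ w (β i)) := by
  have hsum : ∑ j, ℓ w (Function.update β i z j) = ∑ j, ℓ w (β j) - ℓ w (β i) + ℓ w z := by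
    rw [show ∑ j, ℓ w (Function.update β i z j) = ∑ j, (ℓ w ∘ Function.update β i z) j from rfl,
      Function.comp_update, Finset.sum_update_of_mem (mem_univ i),
      Finset.sdiff_singleton_eq_erase, Finset.sum_erase_eq_sub (mem_univ i)]
    simp only [Function.comp_apply]
    ring
  simp only [empiricalRisk, hsum]
  ring

variable {ℓ} [NormedAddCommGroup E]

lemma abs_empiricalRisk_sub_le (hn : 0 < n) {G : ℝ}
    (hlip : ∀ z w w', |ℓ w z - ℓ w' z| ≤ G * ‖w - w'‖) (β : Fin n → Z) (w w' : E) :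
    |empiricalRisk ℓ β w - empiricalRisk ℓ β w'| ≤ G * ‖w - w'‖ := by
  have := norm_inv_smul_sum_le hn (a := fun i => ℓ w (β i) - ℓ w' (β i)) fun i => hlip _ _ _
  simpa [empiricalRisk, ← mul_sub, Finset.sum_sub_distrib] using this

variable [InnerProductSpace ℝ E] [CompleteSpace E]

lemma hasGradientAt_empiricalRisk (hdiff : ∀ z, Differentiable ℝ (fun w => ℓ w z))
    (β : Fin n → Z) (w : E) :
    HasGradientAt (empiricalRisk ℓ β) ((n : ℝ)⁻¹ • ∑ i, gradient (fun w => ℓ w (β i)) w) w := by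
  have hsum := HasFDerivAt.fun_sum (u := univ) fun i _ => (hdiff (β i) w).hasFDerivAt
  rw [hasGradientAt_iff_hasFDerivAt, map_smul, map_sum]
  simp only [toDual_gradient]
  exact hsum.const_mul (n : ℝ)⁻¹

lemma norm_gradient_empiricalRisk_sub_le (hn : 0 < n)
    (hdiff : ∀ z, Differentiable ℝ (fun w => ℓ w z)) {L : ℝ}
    (hsmooth : ∀ z w w',
      ‖gradient (fun w => ℓ w z) w - gradient (fun w => ℓ w z) w'‖ ≤ L * ‖w - w'‖)
    (β : Fin n → Z) (w w' : E) :
    ‖gradient (empiricalRisk ℓ β) w - gradient (empiricalRisk ℓ β) w'‖ ≤ L * ‖w - w'‖ := by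
  rw [(hasGradientAt_empiricalRisk hdiff β w).gradient,
    (hasGradientAt_empiricalRisk hdiff β w').gradient, ← smul_sub, ← Finset.sum_sub_distrib]
  exact norm_inv_smul_sum_le hn fun i => hsmooth _ _ _

end EmpiricalRisk

section Stability

variable {E Z : Type*} [NormedAddCommGroup E] [InnerProductSpace ℝ E] [CompleteSpace E] {n : ℕ}
  {ℓ : E → Z → ℝ}

theorem norm_sub_le_of_isInexactMinimizer_update (hn : 0 < n) {G L η ε : ℝ} (hG : 0 ≤ G)
    (hL : 0 ≤ L) (hη : 0 < η) (hηL : η * L < 1) (hε : ε ≤ G ^ 2 * η / (8 * n ^ 2))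
    (hlip : ∀ z w w', |ℓ w z - ℓ w' z| ≤ G * ‖w - w'‖)
    (hdiff : ∀ z, Differentiable ℝ (fun w => ℓ w z))
    (hsmooth : ∀ z w w',
      ‖gradient (fun w => ℓ w z) w - gradient (fun w => ℓ w z) w'‖ ≤ L * ‖w - w'‖)
    {w₀ : E} {β : Fin n → Z} {i : Fin n} {z : Z} {u v : E}
    (hu : IsInexactMinimizer (proxObjective (empiricalRisk ℓ (Function.update β i z)) w₀ η) ε u)
    (hv : IsInexactMinimizer (proxObjective (empiricalRisk ℓ β) w₀ η) ε v) :
    ‖u - v‖ ≤ 5 * G * η / ((1 - η * L) * n) := by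
  have hn' : (0 : ℝ) < n := by exact_mod_cast hn
  have hdiff_risk : ∀ β : Fin n → Z, Differentiable ℝ (empiricalRisk ℓ β) := fun β w =>
    (hasGradientAt_empiricalRisk hdiff β w).differentiableAt
  have hκ : (empiricalRisk ℓ (Function.update β i z) v - empiricalRisk ℓ β v)
      - (empiricalRisk ℓ (Function.update β i z) u - empiricalRisk ℓ β u)
        ≤ 2 * G / n * ‖u - v‖ := by
    rw [empiricalRisk_update_sub, empiricalRisk_update_sub, ← mul_sub, div_eq_inv_mul,
      mul_assoc]
    gcongr
    have h₁ := hlip z v u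
    have h₂ := hlip (β i) v u
    rw [norm_sub_rev] at h₁ h₂
    linarith [le_abs_self (ℓ v z - ℓ u z), neg_abs_le (ℓ v (β i) - ℓ u (β i))]
  have key := norm_sub_sq_le_of_proxObjective_le_add
    (hdiff_risk _) (norm_gradient_empiricalRisk_sub_le hn hdiff hsmooth _)
    (hdiff_risk _) (norm_gradient_empiricalRisk_sub_le hn hdiff hsmooth _) hη
    (hu.proxObjective_le_add (abs_empiricalRisk_sub_le hn hlip _) hη)
    (hv.proxObjective_le_add (abs_empiricalRisk_sub_le hn hlip _) hη) hκ
  have hquad : (1 - η * L) * (n * ‖u - v‖) ^ 2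
      ≤ 4 * (G * η) * (n * ‖u - v‖) + (G * η) ^ 2 := by
    have hε' : 8 * ε * η * n ^ 2 ≤ (G * η) ^ 2 := by
      rw [le_div_iff₀ (by positivity)] at hε
      nlinarith
    have := mul_le_mul_of_nonneg_left key (by positivity : (0 : ℝ) ≤ 2 * η * n ^ 2)
    field_simp at this
    nlinarith
  have ha : 0 < 1 - η * L := by linarith
  have := le_five_mul_div_of_mul_sq_le ha (by nlinarith) (by positivity) hquad
  rw [le_div_iff₀ ha] at this
  rw [le_div_iff₀ (by positivity)]
  linarith

end Stability

section Symmetrization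

variable {Z : Type*} [MeasurableSpace Z] {n : ℕ}

lemma integral_comp_swap_update {F : Type*} [NormedAddCommGroup F] [NormedSpace ℝ F]
    (μ : Measure Z) [SigmaFinite μ] (i : Fin n) (φ : Z × (Fin n → Z) → F) :
    ∫ q, φ (q.2 i, Function.update q.2 i q.1) ∂(μ.prod (Measure.pi fun _ => μ))
      = ∫ q, φ q ∂(μ.prod (Measure.pi fun _ => μ)) := by
  let ψ := MeasurableEquiv.piFinSuccAbove (fun _ : Fin (n + 1) => Z) (Fin.last n)
  let σ := MeasurableEquiv.piCongrLeft (fun _ : Fin (n + 1) => Z)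
    (Equiv.swap i.castSucc (Fin.last n))
  have hψ := measurePreserving_piFinSuccAbove (fun _ : Fin (n + 1) => μ) (Fin.last n)
  have hσ := measurePreserving_piCongrLeft (fun _ : Fin (n + 1) => μ)
    (Equiv.swap i.castSucc (Fin.last n))
  have hT : ∀ q : Z × (Fin n → Z),
      (ψ.symm.trans σ).trans ψ q = (q.2 i, Function.update q.2 i q.1) := by
    rintro ⟨z, β⟩
    refine Prod.ext ?_ (funext fun j => ?_)
    · simp [ψ, σ, MeasurableEquiv.coe_piCongrLeft, Equiv.piCongrLeft_apply_eq_cast, Fin.snocEquiv]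
    · simp only [ψ, σ, MeasurableEquiv.trans_apply, MeasurableEquiv.piFinSuccAbove_symm_apply,
        MeasurableEquiv.piFinSuccAbove_apply, MeasurableEquiv.coe_piCongrLeft,
        Fin.insertNthEquiv_last, Fin.snocEquiv, Equiv.coe_fn_mk, Equiv.symm_mk,
        Equiv.piCongrLeft_apply_eq_cast, Equiv.symm_swap, cast_eq, Fin.init]
      rcases eq_or_ne j i with rfl | hji
      · simp
      · rw [Function.update_of_ne hji, Equiv.swap_apply_of_ne_of_ne
          (Fin.castSucc_injective n |>.ne hji) (Fin.castSucc_lt_last j).ne, Fin.snoc_castSucc]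
  simpa only [hT] using
    (hψ.comp (hσ.comp hψ.symm)).integral_comp' (f := (ψ.symm.trans σ).trans ψ) φ

variable {F : Type*} [NormedAddCommGroup F] [NormedSpace ℝ F]
  (μ : Measure Z) [IsProbabilityMeasure μ] {H : (Fin n → Z) → Z → F}

-- Swapping the ghost sample `q.1` into slot `i` turns the population term into the `i`-th
-- replace-one term.
lemma integral_sub_sampleMean_eq (hn : 0 < n) (hH : StronglyMeasurable (Function.uncurry H))
    {M : ℝ} (hM : ∀ β z, ‖H β z‖ ≤ M) :
    ∫ β, (∫ z, H β z ∂μ - (n : ℝ)⁻¹ • ∑ i, H β (β i)) ∂(Measure.pi fun _ => μ)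
      = (n : ℝ)⁻¹ • ∑ i, ∫ q, (H (Function.update q.2 i q.1) (q.2 i) - H q.2 (q.2 i))
          ∂(μ.prod (Measure.pi fun _ => μ)) := by
  set π := Measure.pi fun _ : Fin n => μ
  have hint : ∀ {α : Type _} [MeasurableSpace α] (ν : Measure α) [IsFiniteMeasure ν]
      (f : α → (Fin n → Z) × Z), Measurable f → Integrable (fun a => H (f a).1 (f a).2) ν :=
    fun ν _ f hf => .of_bound (hH.comp_measurable hf).aestronglyMeasurable M
      (ae_of_all _ fun a => hM _ _)
  have hpop : Integrable (fun β => ∫ z, H β z ∂μ) π :=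
    .of_bound hH.integral_prod_right.aestronglyMeasurable M (ae_of_all _ fun β => by
      simpa using norm_integral_le_of_norm_le_const (ae_of_all μ (hM β)))
  have hsample : ∀ i, Integrable (fun β => H β (β i)) π := fun i =>
    hint π (fun β => (β, β i)) (by fun_prop)
  have hghost : ∀ i, ∫ q, H (Function.update q.2 i q.1) (q.2 i) ∂(μ.prod π)
      = ∫ β, ∫ z, H β z ∂μ ∂π := fun i => by
    rw [integral_comp_swap_update μ i (fun q => H q.2 q.1),
      integral_prod_symm _ (hint _ (fun q => (q.2, q.1)) (by fun_prop))]
  have hsample_eq : ∀ i, ∫ q, H q.2 (q.2 i) ∂(μ.prod π) = ∫ β, H β (β i) ∂π := fun i => by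
    simp [integral_fun_snd (μ := μ) (fun β => H β (β i))]
  have hdiff : ∀ i, ∫ q, (H (Function.update q.2 i q.1) (q.2 i) - H q.2 (q.2 i)) ∂(μ.prod π)
      = ∫ β, ∫ z, H β z ∂μ ∂π - ∫ β, H β (β i) ∂π := fun i => by
    have hswapped : Integrable (fun q : Z × (Fin n → Z) =>
        H (Function.update q.2 i q.1) (q.2 i)) (μ.prod π) :=
      hint _ (fun q : Z × (Fin n → Z) => (Function.update q.2 i q.1, q.2 i)) (by fun_prop)
    have hsample' : Integrable (fun q : Z × (Fin n → Z) => H q.2 (q.2 i)) (μ.prod π) :=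
      hint _ (fun q : Z × (Fin n → Z) => (q.2, q.2 i)) (by fun_prop)
    rw [integral_sub hswapped hsample', hghost, hsample_eq]
  have hmean : Integrable (fun β => (n : ℝ)⁻¹ • ∑ i, H β (β i)) π :=
    Integrable.smul _ (integrable_finsetSum univ fun i _ => hsample i)
  rw [integral_sub hpop hmean, integral_smul, integral_finsetSum _ fun i _ => hsample i]
  simp only [hdiff, Finset.sum_sub_distrib, Finset.sum_const, card_univ, Fintype.card_fin,
    smul_sub, ← Nat.cast_smul_eq_nsmul ℝ, smul_smul,
    inv_mul_cancel₀ (Nat.cast_ne_zero.2 hn.ne' : (n : ℝ) ≠ 0), one_smul]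

lemma norm_integral_sub_sampleMean_le (hn : 0 < n) (hH : StronglyMeasurable (Function.uncurry H))
    {M : ℝ} (hM : ∀ β z, ‖H β z‖ ≤ M) {C : ℝ}
    (hC : ∀ β i z, ‖H (Function.update β i z) (β i) - H β (β i)‖ ≤ C) :
    ‖∫ β, (∫ z, H β z ∂μ - (n : ℝ)⁻¹ • ∑ i, H β (β i)) ∂(Measure.pi fun _ => μ)‖ ≤ C := by
  rw [integral_sub_sampleMean_eq μ hn hH hM]
  exact norm_inv_smul_sum_le hn fun i => by
    simpa using norm_integral_le_of_norm_le_const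
      (ae_of_all (μ.prod (Measure.pi fun _ => μ)) fun q : Z × (Fin n → Z) => hC q.2 i q.1)

end Symmetrization

section GradientOfExpectation

variable {Z : Type*} [MeasurableSpace Z]
  {E : Type*} [NormedAddCommGroup E] [InnerProductSpace ℝ E] [CompleteSpace E]

lemma norm_gradient_le_of_lipschitz {f : E → ℝ} {G : ℝ} (hG : 0 ≤ G)
    (hlip : ∀ w w', |f w - f w'| ≤ G * ‖w - w'‖) (x : E) : ‖gradient f x‖ ≤ G := by
  have hf : LipschitzWith (Real.toNNReal G) f := .of_dist_le_mul fun w w' => by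
    simpa [Real.dist_eq, dist_eq_norm, Real.coe_toNNReal _ hG] using hlip w w'
  rw [gradient, LinearIsometryEquiv.norm_map]
  simpa [Real.coe_toNNReal _ hG] using norm_fderiv_le_of_lipschitz ℝ hf (x₀ := x)

lemma hasGradientAt_integral_of_lipschitz (μ : Measure Z) [IsFiniteMeasure μ] {ℓ : E → Z → ℝ}
    (hint : ∀ w, Integrable (fun z => ℓ w z) μ) (hdiff : ∀ z, Differentiable ℝ (fun w => ℓ w z))
    {G : ℝ} (hG : 0 ≤ G) (hlip : ∀ z w w', |ℓ w z - ℓ w' z| ≤ G * ‖w - w'‖) (w : E)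
    (hgrad_meas : AEStronglyMeasurable (fun z => gradient (fun w => ℓ w z) w) μ) :
    HasGradientAt (fun w => ∫ z, ℓ w z ∂μ) (∫ z, gradient (fun w => ℓ w z) w ∂μ) w := by
  let D := InnerProductSpace.toDual ℝ E
  have h := hasFDerivAt_integral_of_dominated_of_fderiv_le (μ := μ)
    (F' := fun x z => D (gradient (fun w => ℓ w z) x)) (bound := fun _ => G)
    (Metric.ball_mem_nhds w one_pos) (Eventually.of_forall fun x => (hint x).aestronglyMeasurable)
    (hint w) (D.continuous.comp_aestronglyMeasurable hgrad_meas)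
    (ae_of_all _ fun z x _ => by
      rw [LinearIsometryEquiv.norm_map]
      exact norm_gradient_le_of_lipschitz hG (hlip z) x)
    (integrable_const G) (ae_of_all _ fun z x _ => (hdiff z x).hasGradientAt.hasFDerivAt)
  rw [show ∫ z, D (gradient (fun w => ℓ w z) w) ∂μ = D (∫ z, gradient (fun w => ℓ w z) w ∂μ)
    from D.toLinearIsometry.integral_comp_comm _] at h
  simpa [D] using h.hasGradientAt

-- The `j`-th coordinate of the gradient is a pointwise limit of measurable difference quotients.
lemma measurable_gradient_with_param {ι : Type*} [Fintype ι] [DecidableEq ι]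
    {ℓ : EuclideanSpace ℝ ι → Z → ℝ} (hmeas : Measurable (Function.uncurry ℓ))
    (hdiff : ∀ z, Differentiable ℝ (fun w => ℓ w z)) :
    Measurable fun q : EuclideanSpace ℝ ι × Z => gradient (fun w => ℓ w q.2) q.1 := by
  refine (WithLp.measurable_toLp 2 (ι → ℝ)).comp (measurable_pi_iff.2 fun j => ?_)
  let e : EuclideanSpace ℝ ι := EuclideanSpace.single j 1
  have hlim : ∀ q : EuclideanSpace ℝ ι × Z,
      Tendsto (fun k : ℕ => ((k : ℝ) + 1) * (ℓ (q.1 + ((k : ℝ) + 1)⁻¹ • e) q.2 - ℓ q.1 q.2))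
        atTop (𝓝 (gradient (fun w => ℓ w q.2) q.1 j)) := by
    intro q
    have hline : HasDerivAt (fun t : ℝ => q.1 + t • e) e 0 := by
      simpa using ((hasDerivAt_id (0 : ℝ)).smul_const e).const_add q.1
    have hder : HasDerivAt (fun t : ℝ => ℓ (q.1 + t • e) q.2)
        (gradient (fun w => ℓ w q.2) q.1 j) 0 := by
      have h := (hdiff q.2 _).hasFDerivAt.comp_hasDerivAt (0 : ℝ) hline
      have hcoord :
          ⟪gradient (fun w => ℓ w q.2) q.1, e⟫ = gradient (fun w => ℓ w q.2) q.1 j := by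
        rw [EuclideanSpace.inner_single_right, one_mul, conj_trivial]
      rw [zero_smul, add_zero, ← inner_gradient_left, hcoord] at h
      exact h
    have hseq : Tendsto (fun k : ℕ => ((k : ℝ) + 1)⁻¹) atTop (𝓝[≠] 0) :=
      tendsto_nhdsWithin_of_tendsto_nhds_of_eventually_within _
        (by simpa only [one_div] using tendsto_one_div_add_atTop_nhds_zero_nat (𝕜 := ℝ))
        (Eventually.of_forall fun k => by
          simp only [Set.mem_compl_iff, Set.mem_singleton_iff]
          positivity)
    refine ((hasDerivAt_iff_tendsto_slope_zero.1 hder).comp hseq).congr fun k => ?_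
    simp [smul_eq_mul]
  exact measurable_of_tendsto_metrizable (fun k => measurable_const.mul
    ((hmeas.comp ((measurable_fst.add_const _).prodMk measurable_snd)).sub hmeas))
    (tendsto_pi_nhds.2 hlim)

end GradientOfExpectation

theorem minibatch_prox_gradient_bias_bound_general
    {Z : Type*} [MeasurableSpace Z] (p b : ℕ) (hb : 1 ≤ b)
    (μ : Measure Z) [IsProbabilityMeasure μ]
    (G L η ε : ℝ) (hG : 0 ≤ G) (hL : 0 < L)
    (hη0 : 0 < η) (hηL : η < 1 / L)
    (hε : ε ≤ G ^ 2 * η / (8 * b ^ 2))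
    (ℓ : EuclideanSpace ℝ (Fin p) → Z → ℝ)
    (hmeas : Measurable (Function.uncurry ℓ))
    (hlip : ∀ z w w', |ℓ w z - ℓ w' z| ≤ G * ‖w - w'‖)
    (hdiff : ∀ z, Differentiable ℝ (fun w => ℓ w z))
    (hsmooth : ∀ z w w',
      ‖gradient (fun w => ℓ w z) w - gradient (fun w => ℓ w z) w'‖ ≤ L * ‖w - w'‖)
    (hint : ∀ w, Integrable (fun z => ℓ w z) μ)
    (R : EuclideanSpace ℝ (Fin p) → ℝ) (hR : ∀ w, R w = ∫ z, ℓ w z ∂μ)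
    (w0 : EuclideanSpace ℝ (Fin p))
    (wB : (Fin b → Z) → EuclideanSpace ℝ (Fin p)) (hwBmeas : Measurable wB)
    (hinexact : ∀ β : Fin b → Z,
      ((b : ℝ)⁻¹ * ∑ i, ℓ (wB β) (β i)) + ‖wB β - w0‖ ^ 2 / (2 * η)
        ≤ (⨅ w, ((b : ℝ)⁻¹ * ∑ i, ℓ w (β i)) + ‖w - w0‖ ^ 2 / (2 * η)) + ε) :
    ‖∫ β, (gradient R (wB β)
        - gradient (fun w => (b : ℝ)⁻¹ * ∑ i, ℓ w (β i)) (wB β))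
        ∂(Measure.pi fun _ : Fin b => μ)‖
      ≤ 5 * L * G * η / ((1 - η * L) * b) := by
  set g := fun w z => gradient (fun w => ℓ w z) w
  have hg_meas : Measurable fun q : EuclideanSpace ℝ (Fin p) × Z => g q.1 q.2 :=
    measurable_gradient_with_param hmeas hdiff
  have hgrad_R : ∀ w, gradient R w = ∫ z, g w z ∂μ := fun w => by
    rw [show R = fun w => ∫ z, ℓ w z ∂μ from funext hR]
    exact (hasGradientAt_integral_of_lipschitz μ hint hdiff hG hlip w
      (hg_meas.comp measurable_prodMk_left).aestronglyMeasurable).gradient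
  have hgrad_RB : ∀ (β : Fin b → Z) w, gradient (fun w => (b : ℝ)⁻¹ * ∑ i, ℓ w (β i)) w
      = (b : ℝ)⁻¹ • ∑ i, g w (β i) := fun β w => (hasGradientAt_empiricalRisk hdiff β w).gradient
  have hstab : ∀ (β : Fin b → Z) i z,
      ‖wB (Function.update β i z) - wB β‖ ≤ 5 * G * η / ((1 - η * L) * b) :=
    fun β i z => norm_sub_le_of_isInexactMinimizer_update hb hG hL.le hη0
      (by rwa [lt_div_iff₀ hL] at hηL) hε hlip hdiff hsmooth (hinexact _) (hinexact _)
  have hbias := norm_integral_sub_sampleMean_le μ (H := fun β z => g (wB β) z) hb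
    (hg_meas.comp (hwBmeas.prodMap measurable_id)).stronglyMeasurable
    (fun _ _ => norm_gradient_le_of_lipschitz hG (hlip _) _)
    (fun β i z => (hsmooth _ _ _).trans (mul_le_mul_of_nonneg_left (hstab β i z) hL.le))
  simp only [hgrad_R, hgrad_RB]
  convert hbias using 1
  field_simp

/-- First-moment gradient bound for the minibatch stochastic proximal point
oracle: with a `G`-Lipschitz, `L`-smooth loss, `0 < η < 1/L`, `0 ≤ ε ≤ G²η/(8b²)`, and `w_B` a
measurable selection of `ε`-inexact minimizers of `w ↦ R_B(w) + ‖w − w₀‖²/(2η)` over an i.i.d.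
minibatch `B ∼ 𝒟^b`, one has `‖E_B[∇R(w_B) − ∇R_B(w_B)]‖ ≤ 5LGη/((1 − ηL)b)`. -/
theorem minibatch_prox_gradient_bias_bound
    {Z : Type*} [MeasurableSpace Z] (p b : ℕ) (hb : 1 ≤ b)
    (μ : Measure Z) [IsProbabilityMeasure μ]
    (G L η ε : ℝ) (hG : 0 ≤ G) (hL : 0 < L)
    (hη0 : 0 < η) (hηL : η < 1 / L)
    (hε0 : 0 ≤ ε) (hε : ε ≤ G ^ 2 * η / (8 * b ^ 2))
    (ℓ : EuclideanSpace ℝ (Fin p) → Z → ℝ)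
    (hmeas : Measurable (Function.uncurry ℓ))
    (hlip : ∀ z w w', |ℓ w z - ℓ w' z| ≤ G * ‖w - w'‖)
    (hdiff : ∀ z, Differentiable ℝ (fun w => ℓ w z))
    (hsmooth : ∀ z w w',
      ‖gradient (fun w => ℓ w z) w - gradient (fun w => ℓ w z) w'‖ ≤ L * ‖w - w'‖)
    (hint : ∀ w, Integrable (fun z => ℓ w z) μ)
    (R : EuclideanSpace ℝ (Fin p) → ℝ) (hR : ∀ w, R w = ∫ z, ℓ w z ∂μ)
    (w0 : EuclideanSpace ℝ (Fin p))
    (wB : (Fin b → Z) → EuclideanSpace ℝ (Fin p)) (hwBmeas : Measurable wB)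
    (hinexact : ∀ β : Fin b → Z,
      ((b : ℝ)⁻¹ * ∑ i, ℓ (wB β) (β i)) + ‖wB β - w0‖ ^ 2 / (2 * η)
        ≤ (⨅ w, ((b : ℝ)⁻¹ * ∑ i, ℓ w (β i)) + ‖w - w0‖ ^ 2 / (2 * η)) + ε) :
    ‖∫ β, (gradient R (wB β)
        - gradient (fun w => (b : ℝ)⁻¹ * ∑ i, ℓ w (β i)) (wB β))
        ∂(Measure.pi fun _ : Fin b => μ)‖
      ≤ 5 * L * G * η / ((1 - η * L) * b) :=
  minibatch_prox_gradient_bias_bound_general p b hb μ G L η ε hG hL hη0 hηL hε ℓ hmeas hlip hdiff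
    hsmooth hint R hR w0 wB hwBmeas hinexact
end

section
/- For each m ∈ {1,…,M}, let (𝒵^(m), 𝒟^(m)) be a probability space and ℓ^(m) : ℝ^p × 𝒵^(m) → ℝ a measurable loss such that for every z the map w ↦ ℓ^(m)(w; z) is G-Lipschitz and L-smooth. Define R^(m)(w) = E_{Z∼𝒟^(m)}[ℓ^(m)(w; Z)] and R̄ = (1/M)∑_m R^(m). Fix w ∈ ℝ^p, 0 < η < 1/L, b ≥ 1, and ε with 0 ≤ ε ≤ min{G/(2L), G²η/(8b²)}. Independently for each m, sample an i.i.d. minibatch B^(m) ~ (𝒟^(m))^b, let R_{B^(m)}(u) = (1/b)∑_{z∈B^(m)} ℓ^(m)(u; z), and let w^(m) be a measurable selection of ε-inexact minimizers of u ↦ R_{B^(m)}(u) + ‖u − w‖²/(2η) satisfying ‖w^(m) − w‖ ≤ 2Gη almost surely. Then ‖∇R̄(w) − (1/M)∑_{m=1}^M E[∇R_{B^(m)}(w^(m))]‖² ≤ 12L²G²η² + 75L²G²η²/((1 − ηL)²b²) + 75L²G²η²/((1 − ηL)²b). -/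
/-!
A minibatch gradient taken at the fixed point `w` is an unbiased estimate of `∇R^(m)(w)`, so the
bias of machine `m` is the expectation of `∇R_B(w) − ∇R_B(w^(m))`. By `L`-smoothness and
`‖w^(m) − w‖ ≤ 2Gη` a.s. this difference has norm at most `2LGη`, hence so does the average over
the machines, and the squared bias is at most `4L²G²η²`, below the claimed bound.
-/

open MeasureTheory Finset InnerProductSpace

theorem norm_inv_card_smul_sum_le {ι E : Type*} [Fintype ι] [Nonempty ι]
    [SeminormedAddCommGroup E] [NormedSpace ℝ E] {f : ι → E} {C : ℝ} (h : ∀ i, ‖f i‖ ≤ C) :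
    ‖(Fintype.card ι : ℝ)⁻¹ • ∑ i, f i‖ ≤ C := by
  have hcard : (0 : ℝ) < Fintype.card ι := by exact_mod_cast Fintype.card_pos
  calc ‖(Fintype.card ι : ℝ)⁻¹ • ∑ i, f i‖ ≤ (Fintype.card ι : ℝ)⁻¹ * ∑ _i : ι, C := by
        rw [norm_smul, norm_inv, Real.norm_natCast]
        gcongr
        exact norm_sum_le_of_le _ fun i _ => h i
    _ = C := by rw [sum_const, card_univ, nsmul_eq_mul]; field_simp

section Gradient

variable {F : Type*} [NormedAddCommGroup F] [InnerProductSpace ℝ F] [CompleteSpace F]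

theorem HasGradientAt.const_mul_sum {ι : Type*} {s : Finset ι} {f : ι → F → ℝ} {f' : ι → F}
    {x : F} (h : ∀ i ∈ s, HasGradientAt (f i) (f' i) x) (c : ℝ) :
    HasGradientAt (fun u => c * ∑ i ∈ s, f i u) (c • ∑ i ∈ s, f' i) x := by
  rw [hasGradientAt_iff_hasFDerivAt, map_smul, map_sum]
  exact (HasFDerivAt.fun_sum fun i hi => (h i hi).hasFDerivAt).const_mul c

theorem norm_gradient_le_of_lipschitzWith {f : F → ℝ} {K : NNReal} (hf : LipschitzWith K f)
    (x : F) : ‖gradient f x‖ ≤ K := by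
  rw [gradient, LinearIsometryEquiv.norm_map]
  exact norm_fderiv_le_of_lipschitz ℝ hf

theorem gradient_eq_sum_fderiv_smul {ι : Type*} [Fintype ι] (b : OrthonormalBasis ι ℝ F)
    (f : F → ℝ) (x : F) : gradient f x = ∑ i, fderiv ℝ f x (b i) • b i := by
  conv_lhs => rw [← b.sum_repr' (gradient f x)]
  refine sum_congr rfl fun i _ => ?_
  rw [real_inner_comm, gradient, toDual_symm_apply]

theorem measurable_gradient_of_measurable_uncurry [FiniteDimensional ℝ F] [MeasurableSpace F]
    [BorelSpace F] {Z : Type*} [MeasurableSpace Z] {f : F → Z → ℝ}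
    (hf : Measurable (Function.uncurry f)) (hd : ∀ z, Differentiable ℝ (f · z)) :
    Measurable fun q : F × Z => gradient (f · q.2) q.1 := by
  set b := stdOrthonormalBasis ℝ F
  refine measurable_of_tendsto_metrizable (f := fun (n : ℕ) (q : F × Z) =>
      ∑ i, (((n : ℝ) + 1) * (f (q.1 + ((n : ℝ) + 1)⁻¹ • b i) q.2 - f q.1 q.2)) • b i)
    (fun n => ?_) (tendsto_pi_nhds.2 fun q => ?_)
  · refine Finset.measurable_sum _ fun i _ => Measurable.smul_const ?_ _
    exact ((hf.comp ((measurable_fst.add_const _).prodMk measurable_snd)).sub hf).const_mul _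
  · have hstep : Filter.Tendsto (fun n : ℕ => ‖(n : ℝ) + 1‖) Filter.atTop Filter.atTop :=
      tendsto_norm_atTop_atTop.comp
        (Filter.tendsto_atTop_add_const_right _ 1 tendsto_natCast_atTop_atTop)
    rw [gradient_eq_sum_fderiv_smul b]
    exact tendsto_finsetSum _ fun i _ =>
      ((hd q.2 q.1).hasFDerivAt.lim (b i) hstep).smul_const (b i)

theorem hasGradientAt_integral_of_norm_gradient_le {Z : Type*} [MeasurableSpace Z]
    {μ : Measure Z} [IsFiniteMeasure μ] {f : F → Z → ℝ} {G : ℝ} {x₀ : F}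
    (hf_meas : ∀ x, AEStronglyMeasurable (f x) μ) (hf_int : Integrable (f x₀) μ)
    (hg_meas : AEStronglyMeasurable (fun z => gradient (f · z) x₀) μ)
    (hd : ∀ z, Differentiable ℝ (f · z)) (hg : ∀ z x, ‖gradient (f · z) x‖ ≤ G) :
    HasGradientAt (fun x => ∫ z, f x z ∂μ) (∫ z, gradient (f · z) x₀ ∂μ) x₀ := by
  have hdual : ∫ z, toDual ℝ F (gradient (f · z) x₀) ∂μ
      = toDual ℝ F (∫ z, gradient (f · z) x₀ ∂μ) :=
    (toDual ℝ F).toLinearIsometry.integral_comp_comm _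
  rw [hasGradientAt_iff_hasFDerivAt, ← hdual]
  refine hasFDerivAt_integral_of_dominated_of_fderiv_le (bound := fun _ => G) Filter.univ_mem
    (.of_forall hf_meas) hf_int ((toDual ℝ F).continuous.comp_aestronglyMeasurable hg_meas)
    (.of_forall fun z x _ => ?_) (integrable_const G)
    (.of_forall fun z x _ => (hd z x).hasGradientAt.hasFDerivAt)
  rw [LinearIsometryEquiv.norm_map]
  exact hg z x

end Gradient

section Minibatch

variable {ι Z : Type*} [Fintype ι] [Nonempty ι] [MeasurableSpace Z] {μ : Measure Z}
  [IsProbabilityMeasure μ]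

theorem integral_inv_card_smul_sum_comp_eval {E : Type*} [NormedAddCommGroup E]
    [NormedSpace ℝ E] {g : Z → E} (hg : Integrable g μ) :
    ∫ β, (Fintype.card ι : ℝ)⁻¹ • ∑ i, g (β i) ∂(Measure.pi fun _ : ι => μ) = ∫ z, g z ∂μ := by
  have hcard : (Fintype.card ι : ℝ) ≠ 0 := by exact_mod_cast Fintype.card_ne_zero
  rw [integral_smul, integral_finsetSum _ fun i _ => integrable_comp_eval hg,
    sum_congr rfl fun i _ => integral_comp_eval (μ := fun _ => μ) (i := i) hg.aestronglyMeasurable,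
    sum_const, card_univ, ← Nat.cast_smul_eq_nsmul ℝ, smul_smul, inv_mul_cancel₀ hcard, one_smul]

variable {F : Type*} [NormedAddCommGroup F] [InnerProductSpace ℝ F] [FiniteDimensional ℝ F]
  [MeasurableSpace F] [BorelSpace F]

theorem norm_integral_gradient_sub_integral_gradient_empirical_le {f : F → Z → ℝ}
    (hf : Measurable (Function.uncurry f)) (hd : ∀ z, Differentiable ℝ (f · z)) {G L r : ℝ}
    (hg : ∀ z x, ‖gradient (f · z) x‖ ≤ G) (hL : 0 ≤ L)
    (hsmooth : ∀ z x y, ‖gradient (f · z) x - gradient (f · z) y‖ ≤ L * ‖x - y‖)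
    {v : (ι → Z) → F} (hv : Measurable v) {w : F}
    (hvw : ∀ᵐ β ∂(Measure.pi fun _ : ι => μ), ‖v β - w‖ ≤ r) :
    ‖∫ z, gradient (f · z) w ∂μ
        - ∫ β, gradient (fun u => (Fintype.card ι : ℝ)⁻¹ * ∑ i, f u (β i)) (v β)
            ∂(Measure.pi fun _ : ι => μ)‖ ≤ L * r := by
  set c := (Fintype.card ι : ℝ)⁻¹
  have hgm := measurable_gradient_of_measurable_uncurry hf hd
  have hgrad : ∀ (β : ι → Z) x,
      gradient (fun u => c * ∑ i, f u (β i)) x = c • ∑ i, gradient (f · (β i)) x :=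
    fun β x => (HasGradientAt.const_mul_sum (fun i _ => (hd (β i) x).hasGradientAt) c).gradient
  have hint : ∀ u : (ι → Z) → F, Measurable u →
      Integrable (fun β => c • ∑ i, gradient (f · (β i)) (u β)) (Measure.pi fun _ : ι => μ) :=
    fun u hu => .of_bound
      ((Finset.measurable_sum _ fun i _ => hgm.comp (hu.prodMk (measurable_pi_apply i))).const_smul
        c).aestronglyMeasurable G (.of_forall fun β => norm_inv_card_smul_sum_le fun i => hg _ _)
  have hgw : Integrable (fun z => gradient (f · z) w) μ :=
    .of_bound (hgm.comp (measurable_const.prodMk measurable_id)).aestronglyMeasurable G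
      (.of_forall fun z => hg z w)
  simp_rw [hgrad]
  rw [← integral_inv_card_smul_sum_comp_eval (ι := ι) hgw,
    ← integral_sub (hint _ measurable_const) (hint v hv)]
  refine (norm_integral_le_of_norm_le_const (C := L * r) (hvw.mono fun β hβ => ?_)).trans_eq
    (by simp)
  rw [← smul_sub, ← sum_sub_distrib]
  refine norm_inv_card_smul_sum_le fun i => (hsmooth _ _ _).trans ?_
  rw [norm_sub_rev]
  gcongr

end Minibatch

theorem fedmspp_expected_direction_bias_bound_general
    (p M b : ℕ) (hM : 1 ≤ M) (hb : 1 ≤ b)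
    (Z : Fin M → Type*) [∀ m, MeasurableSpace (Z m)]
    (μ : ∀ m, Measure (Z m)) [∀ m, IsProbabilityMeasure (μ m)]
    (G L η : ℝ) (hG : 0 ≤ G) (hL : 0 < L)
    (ℓ : (m : Fin M) → EuclideanSpace ℝ (Fin p) → Z m → ℝ)
    (hmeas : ∀ m, Measurable (Function.uncurry (ℓ m)))
    (hlip : ∀ m z w w', |ℓ m w z - ℓ m w' z| ≤ G * ‖w - w'‖)
    (hdiff : ∀ m z, Differentiable ℝ (fun w => ℓ m w z))
    (hsmooth : ∀ m z w w',
      ‖gradient (fun w => ℓ m w z) w - gradient (fun w => ℓ m w z) w'‖ ≤ L * ‖w - w'‖)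
    (hint : ∀ m w, Integrable (fun z => ℓ m w z) (μ m))
    (R : Fin M → EuclideanSpace ℝ (Fin p) → ℝ)
    (hR : ∀ m w, R m w = ∫ z, ℓ m w z ∂(μ m))
    (w : EuclideanSpace ℝ (Fin p))
    (wm : (m : Fin M) → (Fin b → Z m) → EuclideanSpace ℝ (Fin p))
    (hwmmeas : ∀ m, Measurable (wm m))
    (hclose : ∀ m, ∀ᵐ β ∂(Measure.pi fun _ : Fin b => μ m), ‖wm m β - w‖ ≤ 2 * G * η) :
    ‖gradient (fun u => (M : ℝ)⁻¹ * ∑ m, R m u) w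
        - (M : ℝ)⁻¹ • ∑ m,
            ∫ β, gradient (fun u => (b : ℝ)⁻¹ * ∑ i, ℓ m u (β i)) (wm m β)
              ∂(Measure.pi fun _ : Fin b => μ m)‖ ^ 2
      ≤ 12 * L ^ 2 * G ^ 2 * η ^ 2
        + 75 * L ^ 2 * G ^ 2 * η ^ 2 / ((1 - η * L) ^ 2 * b ^ 2)
        + 75 * L ^ 2 * G ^ 2 * η ^ 2 / ((1 - η * L) ^ 2 * b) := by
  have : Nonempty (Fin M) := ⟨⟨0, hM⟩⟩
  have : Nonempty (Fin b) := ⟨⟨0, hb⟩⟩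
  have hgrad_le : ∀ m z x, ‖gradient (fun u => ℓ m u z) x‖ ≤ G := fun m z x =>
    (norm_gradient_le_of_lipschitzWith (LipschitzWith.of_dist_le' fun u u' => by
      rw [Real.dist_eq, dist_eq_norm]; exact hlip m z u u') x).trans_eq (Real.coe_toNNReal G hG)
  have hR_grad : ∀ m, HasGradientAt (R m) (∫ z, gradient (fun u => ℓ m u z) w ∂μ m) w := by
    intro m
    rw [show R m = _ from funext (hR m)]
    exact hasGradientAt_integral_of_norm_gradient_le
      (fun x => ((hmeas m).comp measurable_prodMk_left).aestronglyMeasurable) (hint m w)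
      ((measurable_gradient_of_measurable_uncurry (hmeas m) (hdiff m)).comp
        measurable_prodMk_left).aestronglyMeasurable (hdiff m) (hgrad_le m)
  have hbias : ∀ m, ‖∫ z, gradient (fun u => ℓ m u z) w ∂μ m
      - ∫ β, gradient (fun u => (b : ℝ)⁻¹ * ∑ i, ℓ m u (β i)) (wm m β)
          ∂(Measure.pi fun _ : Fin b => μ m)‖ ≤ L * (2 * G * η) := fun m => by
    simpa only [Fintype.card_fin] using norm_integral_gradient_sub_integral_gradient_empirical_le
      (hmeas m) (hdiff m) (hgrad_le m) hL.le (hsmooth m) (hwmmeas m) (hclose m)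
  have hb_sq : 0 ≤ 75 * L ^ 2 * G ^ 2 * η ^ 2 / ((1 - η * L) ^ 2 * (b : ℝ) ^ 2) := by positivity
  have hb_lin : 0 ≤ 75 * L ^ 2 * G ^ 2 * η ^ 2 / ((1 - η * L) ^ 2 * (b : ℝ)) := by positivity
  refine (pow_le_pow_left₀ (norm_nonneg _) (?_ : _ ≤ L * (2 * G * η)) 2).trans
    (by nlinarith [sq_nonneg (L * G * η)])
  rw [(HasGradientAt.const_mul_sum (fun m _ => hR_grad m) _).gradient, ← smul_sub,
    ← sum_sub_distrib]
  simpa only [Fintype.card_fin] using norm_inv_card_smul_sum_le hbias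

/-- Bias bound for the expected averaged minibatch gradients in `FedMSPP`:
for `G`-Lipschitz, `L`-smooth losses, `0 < η < 1/L`, `0 ≤ ε ≤ min{G/(2L), G²η/(8b²)}`, and
`w^(m)` a measurable selection of `ε`-inexact minimizers of the minibatch proximal objective
staying a.s. within `2Gη` of `w`,
`‖∇R̄(w) − (1/M)∑ₘ E[∇R_{B^(m)}(w^(m))]‖² ≤ 12L²G²η² + 75L²G²η²/((1−ηL)²b²) +
75L²G²η²/((1−ηL)²b)`. -/
theorem fedmspp_expected_direction_bias_bound
    (p M b : ℕ) (hM : 1 ≤ M) (hb : 1 ≤ b)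
    (Z : Fin M → Type*) [∀ m, MeasurableSpace (Z m)]
    (μ : ∀ m, Measure (Z m)) [∀ m, IsProbabilityMeasure (μ m)]
    (G L η ε : ℝ) (hG : 0 ≤ G) (hL : 0 < L)
    (hη0 : 0 < η) (hηL : η < 1 / L)
    (hε0 : 0 ≤ ε) (hε : ε ≤ min (G / (2 * L)) (G ^ 2 * η / (8 * b ^ 2)))
    (ℓ : (m : Fin M) → EuclideanSpace ℝ (Fin p) → Z m → ℝ)
    (hmeas : ∀ m, Measurable (Function.uncurry (ℓ m)))
    (hlip : ∀ m z w w', |ℓ m w z - ℓ m w' z| ≤ G * ‖w - w'‖)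
    (hdiff : ∀ m z, Differentiable ℝ (fun w => ℓ m w z))
    (hsmooth : ∀ m z w w',
      ‖gradient (fun w => ℓ m w z) w - gradient (fun w => ℓ m w z) w'‖ ≤ L * ‖w - w'‖)
    (hint : ∀ m w, Integrable (fun z => ℓ m w z) (μ m))
    (R : Fin M → EuclideanSpace ℝ (Fin p) → ℝ)
    (hR : ∀ m w, R m w = ∫ z, ℓ m w z ∂(μ m))
    (w : EuclideanSpace ℝ (Fin p))
    (wm : (m : Fin M) → (Fin b → Z m) → EuclideanSpace ℝ (Fin p))
    (hwmmeas : ∀ m, Measurable (wm m))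
    (hinexact : ∀ m (β : Fin b → Z m),
      ((b : ℝ)⁻¹ * ∑ i, ℓ m (wm m β) (β i)) + ‖wm m β - w‖ ^ 2 / (2 * η)
        ≤ (⨅ u, ((b : ℝ)⁻¹ * ∑ i, ℓ m u (β i)) + ‖u - w‖ ^ 2 / (2 * η)) + ε)
    (hclose : ∀ m, ∀ᵐ β ∂(Measure.pi fun _ : Fin b => μ m), ‖wm m β - w‖ ≤ 2 * G * η) :
    ‖gradient (fun u => (M : ℝ)⁻¹ * ∑ m, R m u) w
        - (M : ℝ)⁻¹ • ∑ m,
            ∫ β, gradient (fun u => (b : ℝ)⁻¹ * ∑ i, ℓ m u (β i)) (wm m β)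
              ∂(Measure.pi fun _ : Fin b => μ m)‖ ^ 2
      ≤ 12 * L ^ 2 * G ^ 2 * η ^ 2
        + 75 * L ^ 2 * G ^ 2 * η ^ 2 / ((1 - η * L) ^ 2 * b ^ 2)
        + 75 * L ^ 2 * G ^ 2 * η ^ 2 / ((1 - η * L) ^ 2 * b) :=
  fedmspp_expected_direction_bias_bound_general p M b hM hb Z μ G L η hG hL ℓ hmeas hlip hdiff
    hsmooth hint R hR w wm hwmmeas hclose
end
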